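/- arXiv:2312.11876 — 6 statements merged into one kernel-verified Lean document; each statement's English description precedes it below -/
import Mathlib

section
/- Let ℓ ≥ 5 and let G be a finite simple graph in which every hole (induced cycle of length at least 4) has length exactly ℓ. Let C be a hole in G and v a vertex not on C that has both a neighbor and a non-neighbor on C. Then there is a path P of C of length at most two such that the set of neighbors of v on C equals the vertex set of P; in particular, if v has exactly the two endpoints of a length-two path of C as candidate neighbors, v is also adjacent to the middle vertex. -/
/-- `f` is an embedding of an induced cycle (hole) of length `n` into `G`. -/
def IsHoleEmb {V : Type*} (G : SimpleGraph V) (n : ℕ) (f : ZMod n → V) : Prop :=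
  4 ≤ n ∧ Function.Injective f ∧
    ∀ i j : ZMod n, G.Adj (f i) (f j) ↔ j = i + 1 ∨ i = j + 1

/-- Every hole of `G` has length exactly `ℓ`. -/
def Monoholed {V : Type*} (G : SimpleGraph V) (ℓ : ℕ) : Prop :=
  ∀ (n : ℕ) (f : ZMod n → V), IsHoleEmb G n f → n = ℓ

/-!
Walk around the hole `C` to a neighbour `f a` of `v` whose predecessor `f (a - 1)` is not a
neighbour. If `v` has neighbours `f b`, `f (b + d)` on `C` with `2 ≤ d ≤ n - 2` and none strictly
between them, then `v` closes the path `f b, …, f (b + d)` into a hole of length `d + 2`, which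
must be `n`. Applied to the last neighbour `f (a + k)` before wrapping around to `f a`, this gives
`k ≤ 2`; applied to `f a, f (a + 2)`, it rules out a gap at `f (a + 1)` because `4 < n`.
-/

theorem ZMod.eq_add_one_iff_val {m : ℕ} [NeZero m] (i j : ZMod m) :
    j = i + 1 ↔ j.val = i.val + 1 ∨ (i.val + 1 = m ∧ j.val = 0) := by
  rw [← ZMod.val_injective m |>.eq_iff, ZMod.val_add, ZMod.val_one_eq_one_mod, Nat.add_mod_mod]
  rcases (show i.val + 1 ≤ m from i.val_lt).lt_or_eq with h | h
  · rw [Nat.mod_eq_of_lt h]; omega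
  · have := j.val_lt
    rw [h, Nat.mod_self]; omega

theorem ZMod.exists_and_not_sub_one {n : ℕ} [NeZero n] {p : ZMod n → Prop}
    (hx : ∃ x, p x) (hy : ∃ y, ¬p y) : ∃ a, p a ∧ ¬p (a - 1) := by
  by_contra! h
  obtain ⟨x, hx⟩ := hx
  obtain ⟨y, hy⟩ := hy
  have hsub : ∀ t : ℕ, p (x - t) := by
    intro t
    induction t with
    | zero => simpa using hx
    | succ t ih => simpa [sub_sub] using h _ ih
  exact hy (by simpa using hsub (x - y).val)

section

variable {V : Type*} {G : SimpleGraph V} {n : ℕ} {f : ZMod n → V}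

theorem IsHoleEmb.natCast_inj (hC : IsHoleEmb G n f) (b : ZMod n) {s t : ℕ} (hs : s < n)
    (ht : t < n) (h : f (b + s) = f (b + t)) : s = t := by
  rw [hC.2.1.eq_iff, add_right_inj, ZMod.natCast_eq_natCast_iff', Nat.mod_eq_of_lt hs,
    Nat.mod_eq_of_lt ht] at h
  exact h

theorem IsHoleEmb.adj_add_natCast_iff (hC : IsHoleEmb G n f) (b : ZMod n) {s t : ℕ}
    (hs : s + 1 < n) (ht : t + 1 < n) :
    G.Adj (f (b + s)) (f (b + t)) ↔ t = s + 1 ∨ s = t + 1 := by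
  have hsucc : ∀ x y : ℕ, x + 1 < n → y + 1 < n →
      (b + (y : ZMod n) = b + x + 1 ↔ y = x + 1) := fun x y hx hy => by
    rw [add_assoc, add_right_inj, ← Nat.cast_succ, ZMod.natCast_eq_natCast_iff',
      Nat.mod_eq_of_lt (by omega : y < n), Nat.mod_eq_of_lt hx]
  rw [hC.2.2, hsucc s t hs ht, hsucc t s ht hs]

/-- The cycle `f b, f (b + 1), …, f (b + d), v`. -/
def pathCycle (f : ZMod n → V) (v : V) (b : ZMod n) (d : ℕ) : ZMod (d + 2) → V :=
  fun k => if k.val = d + 1 then v else f (b + k.val)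

theorem IsHoleEmb.isHoleEmb_pathCycle (hC : IsHoleEmb G n f) {v : V} (hv : v ∉ Set.range f)
    {b : ZMod n} {d : ℕ} (hd : 2 ≤ d) (hdn : d + 2 ≤ n) (hb : G.Adj v (f b))
    (hbd : G.Adj v (f (b + d))) (hgap : ∀ t : ℕ, 0 < t → t < d → ¬G.Adj v (f (b + t))) :
    IsHoleEmb G (d + 2) (pathCycle f v b d) := by
  have hvN : ∀ t : ℕ, t ≤ d → (G.Adj v (f (b + t)) ↔ t = 0 ∨ t = d) := by
    intro t ht
    refine ⟨fun h => ?_, ?_⟩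
    · by_contra! hne
      exact hgap t (by omega) (by omega) h
    · rintro (rfl | rfl)
      · simpa using hb
      · exact hbd
  refine ⟨by omega, fun k k' h => ?_, fun i j => ?_⟩
  · have := k.val_lt
    have := k'.val_lt
    simp only [pathCycle] at h
    split_ifs at h with hk hk'
    · exact ZMod.val_injective _ (hk.trans hk'.symm)
    · exact absurd ⟨_, h.symm⟩ hv
    · exact absurd ⟨_, h⟩ hv
    · exact ZMod.val_injective _ (hC.natCast_inj b (by omega) (by omega) h)
  · have := i.val_lt
    have := j.val_lt
    rw [ZMod.eq_add_one_iff_val, ZMod.eq_add_one_iff_val]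
    simp only [pathCycle]
    split_ifs with hi hj hj
    · exact ⟨fun h => (G.irrefl h).elim, by omega⟩
    · rw [hvN _ (by omega)]; omega
    · rw [G.adj_comm, hvN _ (by omega)]; omega
    · rw [hC.adj_add_natCast_iff b (by omega) (by omega)]; omega

variable {ℓ : ℕ}

theorem Monoholed.gap_add_two_eq (hmono : Monoholed G ℓ) (hC : IsHoleEmb G n f) {v : V}
    (hv : v ∉ Set.range f) {b : ZMod n} {d : ℕ} (hd : 2 ≤ d) (hdn : d + 2 ≤ n)
    (hb : G.Adj v (f b)) (hbd : G.Adj v (f (b + d)))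
    (hgap : ∀ t : ℕ, 0 < t → t < d → ¬G.Adj v (f (b + t))) : d + 2 = n :=
  (hmono _ _ (hC.isHoleEmb_pathCycle hv hd hdn hb hbd hgap)).trans (hmono _ _ hC).symm

theorem Monoholed.exists_adj_add_iff_le (hmono : Monoholed G ℓ) (hC : IsHoleEmb G n f)
    (hn : 5 ≤ n) {v : V} (hv : v ∉ Set.range f) {a : ZMod n} (ha : G.Adj v (f a))
    (ha' : ¬G.Adj v (f (a - 1))) :
    ∃ k ≤ 2, ∀ t < n, G.Adj v (f (a + t)) ↔ t ≤ k := by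
  classical
  set P := fun t : ℕ => G.Adj v (f (a + t))
  set k := Nat.findGreatest P (n - 1)
  have hk : G.Adj v (f (a + k)) :=
    Nat.findGreatest_spec (P := P) (Nat.zero_le _) (by simpa [P] using ha)
  have hk_max : ∀ t, k < t → t ≤ n - 1 → ¬G.Adj v (f (a + t)) :=
    fun _ => Nat.findGreatest_is_greatest
  have hk_le : k ≤ n - 1 := Nat.findGreatest_le _
  have hkn : k ≠ n - 1 := by
    rintro hk'
    rw [hk', Nat.cast_sub (by omega), ZMod.natCast_self, Nat.cast_one, zero_sub,
      ← sub_eq_add_neg] at hk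
    exact ha' hk
  have hk2 : k ≤ 2 := by
    by_contra! hk2
    have hwrap : a + k + ((n - k : ℕ) : ZMod n) = a := by
      rw [add_assoc, ← Nat.cast_add, Nat.add_sub_cancel' (by omega), ZMod.natCast_self, add_zero]
    have := hmono.gap_add_two_eq hC hv (b := a + k) (d := n - k)
      (by omega) (by omega) hk (by rwa [hwrap]) fun t ht htd => by
        rw [add_assoc, ← Nat.cast_add]
        exact hk_max _ (by omega) (by omega)
    omega
  have h1 : k = 2 → G.Adj v (f (a + (1 : ℕ))) := by
    intro hk2
    by_contra h1
    have := hmono.gap_add_two_eq hC hv (b := a) (d := 2) le_rfl (by omega) ha (hk2 ▸ hk)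
      fun t ht ht2 => by obtain rfl : t = 1 := (by omega); exact h1
    omega
  refine ⟨k, hk2, fun t ht =>
    ⟨fun h => not_lt.1 fun hlt => hk_max t hlt (by omega) h, fun h => ?_⟩⟩
  rcases (by omega : t = 0 ∨ t = k ∨ (t = 1 ∧ k = 2)) with rfl | rfl | ⟨rfl, hk2⟩
  · simpa using ha
  · exact hk
  · exact h1 hk2

end

theorem stmt2_general {V : Type*} {ℓ : ℕ} (hℓ : 5 ≤ ℓ) (G : SimpleGraph V)
    (hmono : Monoholed G ℓ) {n : ℕ} {f : ZMod n → V} (hC : IsHoleEmb G n f)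
    {v : V} (hv : v ∉ Set.range f)
    (hnb : ∃ u ∈ Set.range f, G.Adj v u) (hnn : ∃ u ∈ Set.range f, ¬G.Adj v u) :
    ∃ (i : ZMod n) (k : ℕ), k ≤ 2 ∧
      {u | u ∈ Set.range f ∧ G.Adj v u} =
        {u | ∃ t : ℕ, t ≤ k ∧ u = f (i + (t : ZMod n))} := by
  have hn : n = ℓ := hmono n f hC
  have : NeZero n := ⟨by omega⟩
  obtain ⟨a, ha, ha'⟩ := ZMod.exists_and_not_sub_one (p := fun b => G.Adj v (f b))
    (by obtain ⟨_, ⟨x, rfl⟩, hx⟩ := hnb; exact ⟨x, hx⟩)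
    (by obtain ⟨_, ⟨y, rfl⟩, hy⟩ := hnn; exact ⟨y, hy⟩)
  obtain ⟨k, hk, hadj⟩ := hmono.exists_adj_add_iff_le hC (by omega) hv ha ha'
  refine ⟨a, k, hk, Set.ext fun u => ⟨?_, ?_⟩⟩
  · rintro ⟨⟨b, rfl⟩, hb⟩
    obtain ⟨t, ht, rfl⟩ : ∃ t < n, b = a + t := ⟨(b - a).val, ZMod.val_lt _, by simp⟩
    exact ⟨t, (hadj t ht).1 hb, rfl⟩
  · rintro ⟨t, ht, rfl⟩
    exact ⟨⟨_, rfl⟩, (hadj t (by omega)).2 ht⟩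

/-- In an `ℓ`-monoholed graph (`ℓ ≥ 5`), any vertex off a hole `C`
with both a neighbor and a non-neighbor on `C` has its neighborhood on `C` equal
to the vertex set of a subpath of `C` of length at most two. -/
theorem stmt2 {V : Type*} [Fintype V] {ℓ : ℕ} (hℓ : 5 ≤ ℓ) (G : SimpleGraph V)
    (hmono : Monoholed G ℓ) {n : ℕ} {f : ZMod n → V} (hC : IsHoleEmb G n f)
    {v : V} (hv : v ∉ Set.range f)
    (hnb : ∃ u ∈ Set.range f, G.Adj v u) (hnn : ∃ u ∈ Set.range f, ¬G.Adj v u) :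
    ∃ (i : ZMod n) (k : ℕ), k ≤ 2 ∧
      {u | u ∈ Set.range f ∧ G.Adj v u} =
        {u | ∃ t : ℕ, t ≤ k ∧ u = f (i + (t : ZMod n))} :=
  stmt2_general hℓ G hmono hC hv hnb hnn
end

section
/- Let ℓ ≥ 6 and let G be an ℓ-monoholed graph whose vertex set is partitioned into nonempty sets I and J such that: (i) there is no clique Z such that deleting Z disconnects G into parts with all of I on one side and a nonempty part on the other; (ii) every induced path between two vertices of I whose interior lies in J has length exactly two; (iii) G[I] contains no induced path on four vertices; (iv) G contains no induced path p1-p2-p3-p4-p5 with p1, p3, p5 in I and p2, p4 in J; (v) G contains no induced subgraph on vertices i1, i2, i3, i4 in I and j in J in which j is adjacent to i1 and i2, i2 is adjacent to i3 and i4, and there are no other edges. Then for every j in J, the set N(j) ∩ I contains two non-adjacent vertices. -/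
/-- `f` is an embedding of an induced path of length `n` (on `n+1` vertices) into `G`. -/
def IsInducedPathEmb {V : Type*} (G : SimpleGraph V) (n : ℕ) (f : Fin (n+1) → V) : Prop :=
  Function.Injective f ∧
    ∀ i j : Fin (n+1), G.Adj (f i) (f j) ↔ ((i : ℕ) + 1 = (j : ℕ) ∨ (j : ℕ) + 1 = (i : ℕ))

section S6Helpers

variable {V : Type*} (G : SimpleGraph V)

/-- An induced path of length `k` given as a function `ℕ → V` (only values ≤ k matter). -/
def S6IPath (k : ℕ) (p : ℕ → V) : Prop :=
  (∀ s t, s ≤ k → t ≤ k → p s = p t → s = t) ∧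
  (∀ s t, s ≤ k → t ≤ k → (G.Adj (p s) (p t) ↔ t = s + 1 ∨ s = t + 1))

variable {G}

lemma S6IPath.adjc {k : ℕ} {p : ℕ → V} (h : S6IPath G k p) {t : ℕ} (ht : t < k) :
    G.Adj (p t) (p (t+1)) :=
  (h.2 t (t+1) (by omega) (by omega)).2 (Or.inl rfl)

lemma S6IPath.shift {k : ℕ} {p : ℕ → V} (h : S6IPath G k p) (a b : ℕ) (hab : a + b ≤ k) :
    S6IPath G b (fun u => p (a + u)) := by
  constructor
  · intro s t hs ht hst
    have := h.1 (a+s) (a+t) (by omega) (by omega) hst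
    omega
  · intro s t hs ht
    rw [h.2 (a+s) (a+t) (by omega) (by omega)]
    omega

lemma S6IPath.cons {k : ℕ} {p : ℕ → V} (h : S6IPath G k p) (w : V)
    (h0 : G.Adj w (p 0)) (hno : ∀ t, 1 ≤ t → t ≤ k → ¬ G.Adj w (p t))
    (hne : ∀ t, t ≤ k → w ≠ p t) :
    S6IPath G (k+1) (fun u => if u = 0 then w else p (u - 1)) := by
  have key : ∀ s t, s ≤ k + 1 → t ≤ k + 1 → s = 0 → t ≠ 0 →
      (G.Adj (if s = 0 then w else p (s-1)) (if t = 0 then w else p (t-1)) ↔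
        (t = s + 1 ∨ s = t + 1)) := by
    intro s t hs ht hs0 ht0
    simp only [hs0, if_pos rfl, if_neg ht0]
    constructor
    · intro hadj
      left
      by_contra hc
      exact hno (t-1) (by omega) (by omega) hadj
    · intro h'
      have : t = 1 := by omega
      rw [this]; exact h0
  constructor
  · intro s t hs ht hst
    by_cases hs0 : s = 0 <;> by_cases ht0 : t = 0
    · omega
    · simp only [hs0, if_pos rfl, if_neg ht0] at hst
      exact absurd hst (hne (t-1) (by omega))
    · simp only [ht0, if_pos rfl, if_neg hs0] at hst
      exact absurd hst.symm (hne (s-1) (by omega))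
    · simp only [if_neg hs0, if_neg ht0] at hst
      have := h.1 (s-1) (t-1) (by omega) (by omega) hst; omega
  · intro s t hs ht
    by_cases hs0 : s = 0 <;> by_cases ht0 : t = 0
    · simp only [hs0, ht0, if_pos rfl]
      constructor
      · intro h'; exact absurd h' (G.irrefl)
      · omega
    · exact key s t hs ht hs0 ht0
    · rw [G.adj_comm]
      rw [key t s ht hs ht0 hs0]
      omega
    · simp only [if_neg hs0, if_neg ht0]
      rw [h.2 (s-1) (t-1) (by omega) (by omega)]
      omega

lemma S6IPath.snoc {k : ℕ} {p : ℕ → V} (h : S6IPath G k p) (w : V)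
    (h0 : G.Adj (p k) w) (hno : ∀ t, t < k → ¬ G.Adj (p t) w)
    (hne : ∀ t, t ≤ k → w ≠ p t) :
    S6IPath G (k+1) (fun u => if u ≤ k then p u else w) := by
  have key : ∀ s t, s ≤ k + 1 → t ≤ k + 1 → s ≤ k → ¬ t ≤ k →
      (G.Adj (if s ≤ k then p s else w) (if t ≤ k then p t else w) ↔
        (t = s + 1 ∨ s = t + 1)) := by
    intro s t hs ht hs0 ht0
    simp only [if_pos hs0, if_neg ht0]
    have htk : t = k + 1 := by omega
    constructor
    · intro hadj
      left
      by_contra hc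
      exact hno s (by omega) hadj
    · intro h'
      have : s = k := by omega
      rw [this]; exact h0
  constructor
  · intro s t hs ht hst
    by_cases hs0 : s ≤ k <;> by_cases ht0 : t ≤ k
    · simp only [if_pos hs0, if_pos ht0] at hst
      exact h.1 s t hs0 ht0 hst
    · simp only [if_pos hs0, if_neg ht0] at hst
      exact absurd hst.symm (hne s hs0)
    · simp only [if_neg hs0, if_pos ht0] at hst
      exact absurd hst (hne t ht0)
    · omega
  · intro s t hs ht
    by_cases hs0 : s ≤ k <;> by_cases ht0 : t ≤ k
    · simp only [if_pos hs0, if_pos ht0]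
      exact h.2 s t hs0 ht0
    · exact key s t hs ht hs0 ht0
    · rw [G.adj_comm, key t s ht hs ht0 hs0]
      omega
    · simp only [if_neg hs0, if_neg ht0]
      constructor
      · intro h'; exact absurd h' (G.irrefl)
      · omega

variable (G)

/-- Base predicate for path minimization. -/
def S6Base (Smid Send : Set V) (a : V) (n : ℕ) : Prop :=
  ∃ p : ℕ → V, p 0 = a ∧ p n ∈ Send ∧ (∀ t, 0 < t → t < n → p t ∈ Smid) ∧
    (∀ t, t < n → G.Adj (p t) (p (t+1)))

variable {G}

lemma S6exists_min_ipath (Smid Send : Set V) (a : V)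
    (hex : ∃ n, S6Base G Smid Send a n) :
    ∃ n p, p 0 = a ∧ p n ∈ Send ∧
      (∀ t, 0 < t → t < n → p t ∈ Smid ∧ p t ∉ Send) ∧ S6IPath G n p := by
  classical
  set n := Nat.find hex with hndef
  have hn : S6Base G Smid Send a n := Nat.find_spec hex
  have hmin : ∀ m, m < n → ¬ S6Base G Smid Send a m := fun m hm => Nat.find_min hex hm
  obtain ⟨p, hp0, hpn, hpmid, hpadj⟩ := hn
  have hnotend : ∀ t, 0 < t → t < n → p t ∉ Send := by
    intro t ht0 htn hmem
    exact hmin t htn ⟨p, hp0, hmem, fun u hu0 hun => hpmid u hu0 (by omega), fun u hu => hpadj u (by omega)⟩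
  have hinj : ∀ s t, s < t → t ≤ n → p s ≠ p t := by
    intro s t hst htn heq
    set δ := t - s with hδ
    set n' := n - δ with hn'
    have hδ1 : 1 ≤ δ := by omega
    refine hmin n' (by omega) ⟨fun u => if u ≤ s then p u else p (u + δ), by simp [hp0], ?_, ?_, ?_⟩
    · by_cases h : n' ≤ s
      · have hs : n' = s := by omega
        have htn' : t = n := by omega
        simp only [if_pos h]
        rw [hs, heq, htn']
        exact hpn
      · simp only [if_neg h]
        rw [show n' + δ = n by omega]
        exact hpn
    · intro u hu0 hun'
      by_cases h : u ≤ s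
      · simp only [if_pos h]
        exact hpmid u hu0 (by omega)
      · simp only [if_neg h]
        exact hpmid (u + δ) (by omega) (by omega)
    · intro u hun'
      by_cases h : u + 1 ≤ s
      · simp only [if_pos h, if_pos (by omega : u ≤ s)]
        exact hpadj u (by omega)
      · by_cases h2 : u ≤ s
        · have hus : u = s := by omega
          have htln : t < n := by omega
          simp only [if_pos h2, if_neg h]
          rw [hus, heq, show s + 1 + δ = t + 1 by omega]
          exact hpadj t htln
        · simp only [if_neg h, if_neg h2]
          rw [show u + 1 + δ = u + δ + 1 by omega]
          exact hpadj (u + δ) (by omega)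
  have hchord : ∀ s t, s + 2 ≤ t → t ≤ n → ¬ G.Adj (p s) (p t) := by
    intro s t hst htn hadj
    set δ := t - s - 1 with hδ
    set n' := n - δ with hn'
    have hδ1 : 1 ≤ δ := by omega
    refine hmin n' (by omega) ⟨fun u => if u ≤ s then p u else p (u + δ), by simp [hp0], ?_, ?_, ?_⟩
    · simp only [if_neg (show ¬ n' ≤ s by omega)]
      rw [show n' + δ = n by omega]
      exact hpn
    · intro u hu0 hun'
      by_cases h : u ≤ s
      · simp only [if_pos h]
        exact hpmid u hu0 (by omega)
      · simp only [if_neg h]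
        exact hpmid (u + δ) (by omega) (by omega)
    · intro u hun'
      by_cases h : u + 1 ≤ s
      · simp only [if_pos h, if_pos (by omega : u ≤ s)]
        exact hpadj u (by omega)
      · by_cases h2 : u ≤ s
        · have hus : u = s := by omega
          simp only [if_pos h2, if_neg h]
          rw [hus, show s + 1 + δ = t by omega]
          exact hadj
        · simp only [if_neg h, if_neg h2]
          rw [show u + 1 + δ = u + δ + 1 by omega]
          exact hpadj (u + δ) (by omega)
  refine ⟨n, p, hp0, hpn, fun t ht0 htn => ⟨hpmid t ht0 htn, hnotend t ht0 htn⟩, ?_, ?_⟩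
  · intro s t hs ht heq
    by_contra hne
    rcases Nat.lt_or_ge s t with h | h
    · exact hinj s t h ht heq
    · exact hinj t s (by omega) hs heq.symm
  · intro s t hs ht
    constructor
    · intro hadj
      rcases Nat.lt_or_ge s t with h | h
      · by_contra hc
        exact hchord s t (by omega) ht hadj
      · rcases Nat.lt_or_ge t s with h2 | h2
        · by_contra hc
          exact hchord t s (by omega) hs hadj.symm
        · exact absurd (show p s = p t by rw [show s = t by omega]) (fun _ => G.irrefl (by rwa [show s = t by omega] at hadj))
    · rintro (rfl | rfl)
      · exact hpadj s (by omega)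
      · exact (hpadj t (by omega)).symm

/-- Extract a concrete walk from reflexive-transitive closure of a subrelation of adjacency. -/
lemma S6rtg_walk {rel : V → V → Prop} {P : V → Prop}
    (hsub : ∀ x y, rel x y → G.Adj x y ∧ P y) {u w : V}
    (h : Relation.ReflTransGen rel u w) :
    ∃ (n : ℕ) (p : ℕ → V), p 0 = u ∧ p n = w ∧ (∀ t, 0 < t → t ≤ n → P (p t)) ∧
      (∀ t, t < n → G.Adj (p t) (p (t+1))) := by
  induction h with
  | refl => exact ⟨0, fun _ => u, rfl, rfl, fun t ht0 htn => by omega, fun t ht => by omega⟩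
  | @tail b c hab hbc ih =>
    obtain ⟨n, p, hp0, hpn, hmem, hadj⟩ := ih
    refine ⟨n+1, fun t => if t ≤ n then p t else c, by simp [hp0], by simp, ?_, ?_⟩
    · intro t ht0 htn
      by_cases h : t ≤ n
      · simp only [if_pos h]; exact hmem t ht0 h
      · simp only [if_neg h]; exact (hsub _ _ hbc).2
    · intro t ht
      by_cases h : t + 1 ≤ n
      · simp only [if_pos h, if_pos (by omega : t ≤ n)]
        exact hadj t (by omega)
      · have ht' : t = n := by omega
        subst ht'
        simp only [le_refl, ite_true, if_neg h, hpn]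
        exact (hsub _ _ hbc).1

end S6Helpers

section S6Crown

variable {V : Type*} {G : SimpleGraph V} {ℓ : ℕ} {I J : Set V}

lemma S6noC4 (hℓ : 6 ≤ ℓ) (hmono : Monoholed G ℓ) (a b c d : V)
    (hac : a ≠ c) (hbd : b ≠ d)
    (hab : G.Adj a b) (hbc : G.Adj b c) (hcd : G.Adj c d) (hda : G.Adj d a)
    (nac : ¬ G.Adj a c) (nbd : ¬ G.Adj b d) : False := by
  let f : ZMod 4 → V := fun i => if i = 0 then a else if i = 1 then b else if i = 2 then c else d
  have f0 : f 0 = a := rfl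
  have f1 : f 1 = b := rfl
  have f2 : f 2 = c := rfl
  have f3 : f 3 = d := rfl
  have hne : ∀ x : ZMod 4, x = 0 ∨ x = 1 ∨ x = 2 ∨ x = 3 := by decide
  have h4 : (4 : ℕ) = ℓ := by
    apply hmono 4 f
    refine ⟨le_refl 4, ?_, ?_⟩
    · intro x y hxy
      rcases hne x with rfl | rfl | rfl | rfl <;> rcases hne y with rfl | rfl | rfl | rfl <;>
        first
        | rfl
        | (simp only [f0, f1, f2, f3] at hxy
           first
           | exact absurd hxy hab.ne
           | exact absurd hxy hab.ne'
           | exact absurd hxy hbc.ne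
           | exact absurd hxy hbc.ne'
           | exact absurd hxy hcd.ne
           | exact absurd hxy hcd.ne'
           | exact absurd hxy hda.ne
           | exact absurd hxy hda.ne'
           | exact absurd hxy hac
           | exact absurd hxy (fun h => hac h.symm)
           | exact absurd hxy hbd
           | exact absurd hxy (fun h => hbd h.symm))
    · intro i j
      rcases hne i with rfl | rfl | rfl | rfl <;> rcases hne j with rfl | rfl | rfl | rfl <;>
        simp only [f0, f1, f2, f3] <;>
        first
        | exact ⟨fun _ => by decide, fun _ => hab⟩
        | exact ⟨fun _ => by decide, fun _ => hab.symm⟩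
        | exact ⟨fun _ => by decide, fun _ => hbc⟩
        | exact ⟨fun _ => by decide, fun _ => hbc.symm⟩
        | exact ⟨fun _ => by decide, fun _ => hcd⟩
        | exact ⟨fun _ => by decide, fun _ => hcd.symm⟩
        | exact ⟨fun _ => by decide, fun _ => hda⟩
        | exact ⟨fun _ => by decide, fun _ => hda.symm⟩
        | exact ⟨fun h => absurd h nac, fun h => absurd h (by decide)⟩
        | exact ⟨fun h => absurd h (fun h' => nac h'.symm), fun h => absurd h (by decide)⟩
        | exact ⟨fun h => absurd h nbd, fun h => absurd h (by decide)⟩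
        | exact ⟨fun h => absurd h (fun h' => nbd h'.symm), fun h => absurd h (by decide)⟩
        | exact ⟨fun h => absurd h (G.irrefl), fun h => absurd h (by decide)⟩
  omega

lemma S6ax2_apply
    (ax2 : ∀ (k : ℕ) (f : Fin (k+1) → V), IsInducedPathEmb G k f →
      f 0 ∈ I → f (Fin.last k) ∈ I → f 0 ≠ f (Fin.last k) →
      (∀ i : Fin (k+1), i ≠ 0 → i ≠ Fin.last k → f i ∈ J) → k = 2)
    {k : ℕ} {p : ℕ → V} (hip : S6IPath G k p)
    (h0 : p 0 ∈ I) (hk : p k ∈ I) (hne : p 0 ≠ p k)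
    (hint : ∀ t, 0 < t → t < k → p t ∈ J) : k = 2 := by
  have hlast : ((Fin.last k : Fin (k+1)) : ℕ) = k := Fin.val_last k
  apply ax2 k (fun i => p (i : ℕ))
  · constructor
    · intro x y hxy
      exact Fin.ext (hip.1 _ _ (Nat.lt_succ_iff.mp x.isLt) (Nat.lt_succ_iff.mp y.isLt) hxy)
    · intro i j
      rw [hip.2 (i : ℕ) (j : ℕ) (Nat.lt_succ_iff.mp i.isLt) (Nat.lt_succ_iff.mp j.isLt)]
      omega
  · simpa using h0
  · simpa [hlast] using hk
  · simpa [hlast] using hne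
  · intro i hi0 hilast
    apply hint
    · have : (i : ℕ) ≠ 0 := fun h => hi0 (Fin.ext (by simp [h]))
      omega
    · have : (i : ℕ) ≠ k := fun h => hilast (Fin.ext (by simp [h, hlast]))
      omega

lemma S6stable
    (ax2 : ∀ (k : ℕ) (f : Fin (k+1) → V), IsInducedPathEmb G k f →
      f 0 ∈ I → f (Fin.last k) ∈ I → f 0 ≠ f (Fin.last k) →
      (∀ i : Fin (k+1), i ≠ 0 → i ≠ Fin.last k → f i ∈ J) → k = 2)
    {u v : V} (hu : u ∈ I) (hv : v ∈ I) : ¬ G.Adj u v := by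
  intro hadj
  have hip : S6IPath G 1 (fun t => if t = 0 then u else v) := by
    constructor
    · intro s t hs ht hst
      interval_cases s <;> interval_cases t <;>
        simp only [if_pos rfl, if_neg (by omega : (1:ℕ) ≠ 0)] at hst <;>
        first
        | rfl
        | exact absurd hst hadj.ne
        | exact absurd hst.symm hadj.ne
    · intro s t hs ht
      interval_cases s <;> interval_cases t <;>
        simp only [if_pos rfl, if_neg (by omega : (1:ℕ) ≠ 0)]
      · exact ⟨fun h => absurd h (G.irrefl), fun h => absurd h (by decide)⟩
      · exact ⟨fun _ => by decide, fun _ => hadj⟩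
      · exact ⟨fun _ => by decide, fun _ => hadj.symm⟩
      · exact ⟨fun h => absurd h (G.irrefl), fun h => absurd h (by decide)⟩
  have h12 : (1 : ℕ) = 2 := by
    apply S6ax2_apply ax2 hip
    · simpa using hu
    · simpa using hv
    · simpa using hadj.ne
    · intro t ht0 ht1; omega
  omega

lemma S6reach
    (ax1 : ¬ ∃ Z X Y : Set V, G.IsClique Z ∧ Z ∪ X ∪ Y = Set.univ ∧
      Disjoint Z X ∧ Disjoint Z Y ∧ Disjoint X Y ∧ Y.Nonempty ∧
      (∀ x ∈ X, ∀ y ∈ Y, ¬G.Adj x y) ∧ I ⊆ X ∪ Z)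
    (Z : Set V) (hZ : G.IsClique Z) (v : V) (hv : v ∉ Z) :
    ∃ n, S6Base G Zᶜ {u | u ∈ I ∧ u ∉ Z} v n := by
  classical
  set rel := fun a b => G.Adj a b ∧ b ∉ Z with hrel
  set Y := {u | Relation.ReflTransGen rel v u} with hY
  have hYZ : ∀ u ∈ Y, u ∉ Z := by
    intro u hu
    rcases (Relation.ReflTransGen.cases_tail hu) with h | ⟨c, _, hc⟩
    · rw [h]; exact hv
    · exact hc.2
  by_cases hIY : ∃ i, i ∈ I ∧ i ∈ Y
  · obtain ⟨i, hiI, hiY⟩ := hIY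
    obtain ⟨n, p, hp0, hpn, hmem, hadj⟩ := S6rtg_walk (P := fun y => y ∉ Z)
      (fun x y h => ⟨h.1, h.2⟩) hiY
    exact ⟨n, p, hp0, by rw [hpn]; exact ⟨hiI, hYZ i hiY⟩,
      fun t ht0 htn => hmem t ht0 (by omega), hadj⟩
  · exfalso
    apply ax1
    refine ⟨Z, (Z ∪ Y)ᶜ, Y, hZ, ?_, ?_, ?_, ?_, ⟨v, Relation.ReflTransGen.refl⟩, ?_, ?_⟩
    · ext u
      simp only [Set.mem_union, Set.mem_compl_iff, Set.mem_univ, iff_true]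
      tauto
    · rw [Set.disjoint_left]
      intro u hu hu'
      exact hu' (Or.inl hu)
    · rw [Set.disjoint_left]
      intro u hu hu'
      exact hYZ u hu' hu
    · rw [Set.disjoint_left]
      intro u hu hu'
      exact hu (Or.inr hu')
    · intro x hx y hy hadj
      exact hx (Or.inr (Relation.ReflTransGen.tail hy
        ⟨hadj.symm, fun hxZ => hx (Or.inl hxZ)⟩))
    · intro i hiI
      by_cases hiZ : i ∈ Z
      · exact Or.inr hiZ
      · refine Or.inl ?_
        intro h
        rcases h with h | h
        · exact hiZ h
        · exact hIY ⟨i, hiI, h⟩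

end S6Crown

section S6Main

variable {V : Type*} {G : SimpleGraph V} {ℓ : ℕ} {I J : Set V}

lemma S6nosingleton [Fintype V] (hℓ : 6 ≤ ℓ) (hmono : Monoholed G ℓ)
    (hpart : I ∪ J = Set.univ) (hdisj : Disjoint I J)
    (ax1 : ¬ ∃ Z X Y : Set V, G.IsClique Z ∧ Z ∪ X ∪ Y = Set.univ ∧
      Disjoint Z X ∧ Disjoint Z Y ∧ Disjoint X Y ∧ Y.Nonempty ∧
      (∀ x ∈ X, ∀ y ∈ Y, ¬G.Adj x y) ∧ I ⊆ X ∪ Z)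
    (ax2 : ∀ (k : ℕ) (f : Fin (k+1) → V), IsInducedPathEmb G k f →
      f 0 ∈ I → f (Fin.last k) ∈ I → f 0 ≠ f (Fin.last k) →
      (∀ i : Fin (k+1), i ≠ 0 → i ≠ Fin.last k → f i ∈ J) → k = 2)
    (ax4 : ¬ ∃ p1 p2 p3 p4 p5 : V, p1 ∈ I ∧ p3 ∈ I ∧ p5 ∈ I ∧ p2 ∈ J ∧ p4 ∈ J ∧
      p1 ≠ p2 ∧ p1 ≠ p3 ∧ p1 ≠ p4 ∧ p1 ≠ p5 ∧ p2 ≠ p3 ∧ p2 ≠ p4 ∧ p2 ≠ p5 ∧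
      p3 ≠ p4 ∧ p3 ≠ p5 ∧ p4 ≠ p5 ∧
      G.Adj p1 p2 ∧ G.Adj p2 p3 ∧ G.Adj p3 p4 ∧ G.Adj p4 p5 ∧
      ¬G.Adj p1 p3 ∧ ¬G.Adj p1 p4 ∧ ¬G.Adj p1 p5 ∧ ¬G.Adj p2 p4 ∧ ¬G.Adj p2 p5 ∧ ¬G.Adj p3 p5)
    (j z : V) (hjJ : j ∈ J) (hzI : z ∈ I) (hjz : G.Adj j z)
    (huniq : ∀ i ∈ I, G.Adj j i → i = z) : False := by
  classical
  have stab : ∀ u v : V, u ∈ I → v ∈ I → ¬ G.Adj u v := fun u v hu hv => S6stable ax2 hu hv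
  have hJI : ∀ x : V, x ∈ J → x ∉ I := fun x hx hx' => Set.disjoint_left.mp hdisj hx' hx
  have hIorJ : ∀ x : V, x ∉ I → x ∈ J := by
    intro x hx
    have hx2 : x ∈ I ∪ J := hpart ▸ Set.mem_univ x
    rw [Set.mem_union] at hx2
    exact hx2.resolve_left hx
  set Good : Finset V → Prop := fun K =>
    G.IsClique ↑K ∧ z ∈ K ∧ j ∉ K ∧
      (∀ c ∈ K, c ≠ z → c ∈ J ∧ ∃ ic, ic ∈ I ∧ ic ≠ z ∧ G.Adj c ic) with hGood
  have step : ∀ K : Finset V, Good K → ∃ b, b ∉ K ∧ Good (insert b K) := by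
    intro K hK
    obtain ⟨hKcl, hzK, hjK, hKprop⟩ := hK
    have hex := S6reach (I := I) ax1 (↑K) hKcl j (by simpa using hjK)
    obtain ⟨n, p, hp0, hpn, hmid, hip⟩ := S6exists_min_ipath _ _ _ hex
    obtain ⟨hpnI, hpnK⟩ : p n ∈ I ∧ p n ∉ (↑K : Set V) := hpn
    have hmidK : ∀ t, 0 < t → t < n → p t ∉ (↑K : Set V) := fun t h1 h2 => (hmid t h1 h2).1
    have hmidJ : ∀ t, 0 < t → t < n → p t ∈ J := by
      intro t h1 h2
      apply hIorJ
      intro hI'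
      exact (hmid t h1 h2).2 ⟨hI', (hmid t h1 h2).1⟩
    have hallK : ∀ t, t ≤ n → p t ∉ (↑K : Set V) := by
      intro t ht
      rcases Nat.eq_zero_or_pos t with rfl | h1
      · rw [hp0]; simpa using hjK
      · rcases Nat.lt_or_ge t n with h2 | h2
        · exact hmidK t h1 h2
        · have htn : t = n := by omega
          rw [htn]; exact hpnK
    have hn2 : 2 ≤ n := by
      rcases Nat.lt_or_ge n 2 with h | h
      · interval_cases n
        · exact absurd (hp0 ▸ hpnI) (hJI j hjJ)
        · exfalso
          have hadj01 : G.Adj (p 0) (p 1) := hip.adjc (by omega)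
          rw [hp0] at hadj01
          have heq := huniq (p 1) hpnI hadj01
          exact hpnK (heq ▸ (Finset.mem_coe.mpr hzK))
      · exact h
    set P : ℕ → Prop := fun t => G.Adj z (p t) with hPdef
    have hP0 : P 0 := by show G.Adj z (p 0); rw [hp0]; exact hjz.symm
    set T := Nat.findGreatest P n with hTdef
    have hPT : P T := Nat.findGreatest_spec (Nat.zero_le n) hP0
    have hTle : T ≤ n := Nat.findGreatest_le n
    have hTmax : ∀ u, T < u → u ≤ n → ¬ P u := fun u h1 h2 => Nat.findGreatest_is_greatest h1 h2
    have hTltn : T < n := by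
      rcases Nat.lt_or_ge T n with h | h
      · exact h
      · exfalso
        have hTn : T = n := by omega
        exact stab z (p n) hzI hpnI (hTn ▸ hPT)
    have hznep : ∀ t, t ≤ n → z ≠ p t := by
      intro t ht heq
      exact hallK t ht (heq ▸ (Finset.mem_coe.mpr hzK))
    have hshift : S6IPath G (n - T) (fun u => p (T + u)) := hip.shift T (n - T) (by omega)
    have hq := hshift.cons z (by simpa using hPT)
      (fun t h1 h2 => hTmax (T + t) (by omega) (by omega))
      (fun t ht => hznep (T + t) (by omega))
    have hTn1 : T = n - 1 := by
      have h2 : n - T + 1 = 2 := by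
        apply S6ax2_apply ax2 hq
        · simpa using hzI
        · simp only [if_neg (by omega : ¬ (n - T + 1) = 0)]
          rw [show T + (n - T + 1 - 1) = n by omega]
          exact hpnI
        · simp only [if_pos rfl, if_neg (by omega : ¬ (n - T + 1) = 0)]
          rw [show T + (n - T + 1 - 1) = n by omega]
          exact hznep n (le_refl n)
        · intro t h1 h2
          simp only [if_neg (by omega : ¬ t = 0)]
          rcases Nat.eq_zero_or_pos (T + (t - 1)) with h0 | h0
          · rw [h0, hp0]; exact hjJ
          · exact hmidJ (T + (t - 1)) h0 (by omega)
      omega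
    have hzb : G.Adj z (p (n-1)) := hTn1 ▸ hPT
    have hbJ : p (n-1) ∈ J := hmidJ (n-1) (by omega) (by omega)
    have hbib : G.Adj (p (n-1)) (p n) := by
      have := hip.adjc (t := n-1) (by omega)
      rwa [show n-1+1 = n by omega] at this
    have hbK : p (n-1) ∉ (↑K : Set V) := hallK (n-1) (by omega)
    have hibz : p n ≠ z := fun h => hpnK (h ▸ (Finset.mem_coe.mpr hzK))
    have hbj : p (n-1) ≠ j := by
      intro h
      have := hip.1 (n-1) 0 (by omega) (by omega) (h.trans hp0.symm)
      omega
    have hadjall : ∀ c ∈ K, G.Adj (p (n-1)) c := by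
      intro c hcK
      by_cases hcz : c = z
      · rw [hcz]; exact hzb.symm
      · obtain ⟨hcJ, ic, hicI, hicz, hcic⟩ := hKprop c hcK hcz
        by_contra hcb
        have hzc : G.Adj z c :=
          hKcl (Finset.mem_coe.mpr hzK) (Finset.mem_coe.mpr hcK) (Ne.symm hcz)
        have hcb' : ¬ G.Adj c (p (n-1)) := fun h => hcb h.symm
        have hcne : c ≠ p (n-1) := fun h => hbK (h ▸ Finset.mem_coe.mpr hcK)
        have hcnib : c ≠ p n := fun h => hpnK (h ▸ Finset.mem_coe.mpr hcK)
        by_cases hA : ic = p n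
        · exact S6noC4 hℓ hmono z c ic (p (n-1)) (Ne.symm hicz) hcne
            hzc hcic (hA ▸ hbib.symm) hzb.symm (stab z ic hzI hicI) hcb'
        · by_cases hB : G.Adj ic (p (n-1))
          · exact S6noC4 hℓ hmono z c ic (p (n-1)) (Ne.symm hicz) hcne
              hzc hcic hB hzb.symm (stab z ic hzI hicI) hcb'
          · by_cases hC : G.Adj c (p n)
            · exact S6noC4 hℓ hmono z (p (n-1)) (p n) c (Ne.symm hibz) (Ne.symm hcne)
                hzb hbib hC.symm hzc.symm (stab z (p n) hzI hpnI) hcb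
            · apply ax4
              refine ⟨ic, c, z, p (n-1), p n, hicI, hzI, hpnI, hcJ, hbJ, ?_, hicz, ?_, hA, hcz,
                hcne, hcnib, ?_, Ne.symm hibz, ?_, hcic.symm, hzc.symm, hzb, hbib,
                stab ic z hicI hzI, hB, stab ic (p n) hicI hpnI, hcb', hC,
                stab z (p n) hzI hpnI⟩
              · exact fun h => (hJI c hcJ) (h ▸ hicI)
              · exact fun h => (hJI (p (n-1)) hbJ) (h ▸ hicI)
              · exact fun h => (hJI (p (n-1)) hbJ) (h.symm ▸ hzI)
              · exact fun h => (hJI (p (n-1)) hbJ) (h ▸ hpnI)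
    refine ⟨p (n-1), by simpa using hbK, ?_, ?_, ?_, ?_⟩
    · rw [Finset.coe_insert]
      apply hKcl.insert
      intro y hy hny
      exact (hadjall y (Finset.mem_coe.mp hy)).symm.symm
    · exact Finset.mem_insert_of_mem hzK
    · intro h
      rcases Finset.mem_insert.mp h with h | h
      · exact hbj h.symm
      · exact hjK h
    · intro c hc hcz
      rcases Finset.mem_insert.mp hc with rfl | h
      · exact ⟨hbJ, p n, hpnI, hibz, hbib⟩
      · exact hKprop c h hcz
  have grow : ∀ m : ℕ, ∃ K : Finset V, Good K ∧ m ≤ K.card := by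
    intro m
    induction m with
    | zero =>
      refine ⟨{z}, ⟨?_, Finset.mem_singleton_self z, ?_, ?_⟩, by omega⟩
      · rw [Finset.coe_singleton]
        exact G.isClique_singleton z
      · rw [Finset.mem_singleton]
        exact fun h => G.irrefl (h ▸ hjz)
      · intro c hc hcz
        exact absurd (Finset.mem_singleton.mp hc) hcz
    | succ m ih =>
      obtain ⟨K, hK, hcard⟩ := ih
      obtain ⟨b, hbK, hK'⟩ := step K hK
      exact ⟨insert b K, hK', by rw [Finset.card_insert_of_notMem hbK]; omega⟩
  obtain ⟨K, _, hcard⟩ := grow (Fintype.card V + 1)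
  have := Finset.card_le_univ K
  omega

end S6Main

section S6Main2

variable {V : Type*} {G : SimpleGraph V} {ℓ : ℕ} {I J : Set V}

lemma S6hasnbr [Fintype V] (hℓ : 6 ≤ ℓ) (hmono : Monoholed G ℓ)
    (hpart : I ∪ J = Set.univ) (hdisj : Disjoint I J)
    (ax1 : ¬ ∃ Z X Y : Set V, G.IsClique Z ∧ Z ∪ X ∪ Y = Set.univ ∧
      Disjoint Z X ∧ Disjoint Z Y ∧ Disjoint X Y ∧ Y.Nonempty ∧
      (∀ x ∈ X, ∀ y ∈ Y, ¬G.Adj x y) ∧ I ⊆ X ∪ Z)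
    (ax2 : ∀ (k : ℕ) (f : Fin (k+1) → V), IsInducedPathEmb G k f →
      f 0 ∈ I → f (Fin.last k) ∈ I → f 0 ≠ f (Fin.last k) →
      (∀ i : Fin (k+1), i ≠ 0 → i ≠ Fin.last k → f i ∈ J) → k = 2)
    (ax4 : ¬ ∃ p1 p2 p3 p4 p5 : V, p1 ∈ I ∧ p3 ∈ I ∧ p5 ∈ I ∧ p2 ∈ J ∧ p4 ∈ J ∧
      p1 ≠ p2 ∧ p1 ≠ p3 ∧ p1 ≠ p4 ∧ p1 ≠ p5 ∧ p2 ≠ p3 ∧ p2 ≠ p4 ∧ p2 ≠ p5 ∧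
      p3 ≠ p4 ∧ p3 ≠ p5 ∧ p4 ≠ p5 ∧
      G.Adj p1 p2 ∧ G.Adj p2 p3 ∧ G.Adj p3 p4 ∧ G.Adj p4 p5 ∧
      ¬G.Adj p1 p3 ∧ ¬G.Adj p1 p4 ∧ ¬G.Adj p1 p5 ∧ ¬G.Adj p2 p4 ∧ ¬G.Adj p2 p5 ∧ ¬G.Adj p3 p5)
    (j0 : V) (hj0 : j0 ∈ J) (hno : ∀ i ∈ I, ¬ G.Adj j0 i) : False := by
  classical
  have stab : ∀ u v : V, u ∈ I → v ∈ I → ¬ G.Adj u v := fun u v hu hv => S6stable ax2 hu hv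
  have hIorJ : ∀ x : V, x ∉ I → x ∈ J := by
    intro x hx
    have hx2 : x ∈ I ∪ J := hpart ▸ Set.mem_univ x
    rw [Set.mem_union] at hx2
    exact hx2.resolve_left hx
  have hJI : ∀ x : V, x ∈ J → x ∉ I := fun x hx hx' => Set.disjoint_left.mp hdisj hx' hx
  set T : Set V := {v | v ∈ J ∧ ∀ i ∈ I, ¬ G.Adj v i} with hTdef
  have hj0T : j0 ∈ T := ⟨hj0, hno⟩
  set rel : V → V → Prop := fun a b => G.Adj a b ∧ a ∈ T ∧ b ∈ T with hrel
  set Y : Set V := {u | Relation.ReflTransGen rel j0 u} with hYdef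
  have hYT : ∀ u ∈ Y, u ∈ T := by
    intro u hu
    rcases Relation.ReflTransGen.cases_tail hu with h | ⟨c, _, hc⟩
    · rw [h]; exact hj0T
    · exact hc.2.2
  set Zs : Set V := {w | w ∉ Y ∧ ∃ y ∈ Y, G.Adj w y} with hZdef
  have hZI : ∀ w ∈ Zs, w ∉ I := by
    intro w hw hwI
    obtain ⟨hwY, y, hyY, hadj⟩ := hw
    exact (hYT y hyY).2 w hwI hadj.symm
  have hZJ : ∀ w ∈ Zs, w ∈ J := fun w hw => hIorJ w (hZI w hw)
  have hZT : ∀ w ∈ Zs, w ∉ T := by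
    intro w hw hwT
    obtain ⟨hwY, y, hyY, hadj⟩ := hw
    exact hwY (Relation.ReflTransGen.tail hyY ⟨hadj.symm, hYT y hyY, hwT⟩)
  have hNC : ¬ G.IsClique Zs := by
    intro hcl
    apply ax1
    refine ⟨Zs, (Zs ∪ Y)ᶜ, Y, hcl, ?_, ?_, ?_, ?_, ⟨j0, Relation.ReflTransGen.refl⟩, ?_, ?_⟩
    · ext u
      simp only [Set.mem_union, Set.mem_compl_iff, Set.mem_univ, iff_true]
      tauto
    · rw [Set.disjoint_left]; intro u hu hu'; exact hu' (Or.inl hu)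
    · rw [Set.disjoint_left]; intro u hu hu'; exact hu.1 hu'
    · rw [Set.disjoint_left]; intro u hu hu'; exact hu (Or.inr hu')
    · intro x hx y hy hadj
      exact hx (Or.inl ⟨fun hxY => hx (Or.inr hxY), y, hy, hadj⟩)
    · intro i hiI
      by_cases hiZ : i ∈ Zs
      · exact Or.inr hiZ
      · refine Or.inl ?_
        intro h
        rcases h with h | h
        · exact hiZ h
        · exact Set.disjoint_left.mp hdisj hiI (hYT i h).1
  have hpair : ∃ a ∈ Zs, ∃ b ∈ Zs, a ≠ b ∧ ¬ G.Adj a b := by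
    by_contra hcon
    push_neg at hcon
    exact hNC fun x hx y hy hxy => hcon x hx y hy hxy
  obtain ⟨a, haZ, b, hbZ, habne, hnadj⟩ := hpair
  have hnbrs : ∀ w ∈ Zs, ∃ i1 i2, i1 ∈ I ∧ i2 ∈ I ∧ i1 ≠ i2 ∧ G.Adj w i1 ∧ G.Adj w i2 := by
    intro w hw
    have hwJ := hZJ w hw
    have hwT := hZT w hw
    have hone : ∃ i ∈ I, G.Adj w i := by
      by_contra hcon
      push_neg at hcon
      exact hwT ⟨hwJ, hcon⟩
    obtain ⟨i1, hi1I, hadj1⟩ := hone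
    by_cases huq : ∀ i ∈ I, G.Adj w i → i = i1
    · exact absurd (S6nosingleton hℓ hmono hpart hdisj ax1 ax2 ax4 w i1 hwJ hi1I hadj1 huq) id
    · push_neg at huq
      obtain ⟨i2, hi2I, hadj2, hne⟩ := huq
      exact ⟨i2, i1, hi2I, hi1I, hne, hadj2, hadj1⟩
  obtain ⟨ia1, ia2, hia1, hia2, hiane, haa1, haa2⟩ := hnbrs a haZ
  obtain ⟨ib1, ib2, hib1, hib2, hibne, hbb1, hbb2⟩ := hnbrs b hbZ
  obtain ⟨ya, hyaY, haya⟩ : ∃ y ∈ Y, G.Adj a y := haZ.2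
  obtain ⟨yb, hybY, hbyb⟩ : ∃ y ∈ Y, G.Adj b y := hbZ.2
  -- symmetric relation within Y
  set rel4 : V → V → Prop := fun x y => G.Adj x y ∧ x ∈ Y ∧ y ∈ Y with hrel4
  have hsymm4 : Symmetric rel4 := fun x y h => ⟨h.1.symm, h.2.2, h.2.1⟩
  have hY4 : ∀ u, u ∈ Y → Relation.ReflTransGen rel4 j0 u := by
    intro u hu
    have hu' : Relation.ReflTransGen rel j0 u := hu
    induction hu' with
    | refl => exact Relation.ReflTransGen.refl
    | @tail x c hx hc ih =>
      exact Relation.ReflTransGen.tail (ih hx) ⟨hc.1, hx, Relation.ReflTransGen.tail hx hc⟩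
  set rel2 : V → V → Prop := fun x y => G.Adj x y ∧ (y ∈ Y ∨ y = b) with hrel2
  have hR : Relation.ReflTransGen rel2 a b := by
    have h1 : Relation.ReflTransGen rel2 a ya :=
      Relation.ReflTransGen.single ⟨haya, Or.inl hyaY⟩
    have h4 : Relation.ReflTransGen rel4 ya yb :=
      Relation.ReflTransGen.trans
        (@Std.Symm.symm _ (Relation.ReflTransGen rel4) (@Relation.ReflTransGen.stdSymm _ rel4 ⟨fun x y h => hsymm4 h⟩) _ _ (hY4 ya hyaY)) (hY4 yb hybY)
    have h2 : Relation.ReflTransGen rel2 ya yb :=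
      Relation.ReflTransGen.mono (r := rel4) (p := rel2) (by intro x y h; exact ⟨h.1, Or.inl h.2.2⟩) ya yb h4
    exact Relation.ReflTransGen.tail (h1.trans h2) ⟨hbyb.symm, Or.inr rfl⟩
  obtain ⟨n0, p0, hp00, hp0n, hp0mem, hp0adj⟩ :=
    S6rtg_walk (P := fun y => y ∈ Y ∨ y = b) (fun x y h => ⟨h.1, h.2⟩) hR
  have hexq : ∃ n, S6Base G (Y ∪ {b}) {b} a n := by
    refine ⟨n0, p0, hp00, by rw [hp0n]; exact rfl, ?_, hp0adj⟩
    intro t ht0 htn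
    rcases hp0mem t ht0 (by omega) with h | h
    · exact Or.inl h
    · exact Or.inr (by rw [h]; exact rfl)
  obtain ⟨m, q, hq0, hqm', hqmid, hq⟩ := S6exists_min_ipath _ _ _ hexq
  have hqm : q m = b := hqm'
  have hqY : ∀ t, 0 < t → t < m → q t ∈ Y := by
    intro t h1 h2
    rcases (hqmid t h1 h2).1 with h | h
    · exact h
    · exact absurd h (hqmid t h1 h2).2
  have hqT : ∀ t, 0 < t → t < m → q t ∈ T := fun t h1 h2 => hYT _ (hqY t h1 h2)
  have hm2 : 2 ≤ m := by
    rcases Nat.lt_or_ge m 2 with h | h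
    · interval_cases m
      · exact absurd (hq0 ▸ hqm) habne
      · exact absurd (by rw [← hq0, ← hqm]; exact hq.adjc (by omega)) hnadj
    · exact h
  have haJ := hZJ a haZ
  have hbJ := hZJ b hbZ
  -- N(a) ∩ I ⊆ N(b) or vice versa
  have hsub : (∀ x, x ∈ I → G.Adj a x → G.Adj b x) ∨ (∀ x, x ∈ I → G.Adj b x → G.Adj a x) := by
    by_contra hcon
    push_neg at hcon
    obtain ⟨⟨x, hxI, hax, hnbx⟩, ⟨y, hyI, hby, hnay⟩⟩ := hcon
    have hxy : x ≠ y := fun h => hnbx (h ▸ hby)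
    have hq1 := hq.snoc y (by rw [hqm]; exact hby) ?hno1 ?hne1
    case hno1 =>
      intro t ht
      rcases Nat.eq_zero_or_pos t with rfl | h1
      · rw [hq0]; exact fun h => hnay h
      · exact (hqT t h1 ht).2 y hyI
    case hne1 =>
      intro t ht heq
      rcases Nat.eq_zero_or_pos t with rfl | h1
      · rw [hq0] at heq; exact hJI a haJ (heq ▸ hyI)
      · rcases Nat.lt_or_ge t m with h2 | h2
        · exact (hJI _ (hqT t h1 h2).1) (heq ▸ hyI)
        · have : t = m := by omega
          rw [this, hqm] at heq
          exact hJI b hbJ (heq ▸ hyI)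
    have hr := hq1.cons x (by simp only [if_pos (Nat.zero_le m)]; rw [hq0]; exact hax.symm)
      ?hno2 ?hne2
    case hno2 =>
      intro t h1 h2
      by_cases hle : t ≤ m
      · simp only [if_pos hle]
        rcases Nat.lt_or_ge t m with h3 | h3
        · exact fun h => (hqT t h1 h3).2 x hxI h.symm
        · have : t = m := by omega
          rw [this, hqm]
          exact fun h => hnbx h.symm
      · simp only [if_neg hle]
        exact stab x y hxI hyI
    case hne2 =>
      intro t ht
      by_cases hle : t ≤ m
      · simp only [if_pos hle]
        intro heq
        rcases Nat.eq_zero_or_pos t with rfl | h1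
        · rw [hq0] at heq; exact hJI a haJ (heq ▸ hxI)
        · rcases Nat.lt_or_ge t m with h2 | h2
          · exact (hJI _ (hqT t h1 h2).1) (heq ▸ hxI)
          · have : t = m := by omega
            rw [this, hqm] at heq
            exact hJI b hbJ (heq ▸ hxI)
      · simp only [if_neg hle]
        exact hxy
    have hfin : m + 1 + 1 = 2 := by
      apply S6ax2_apply ax2 hr
      · simpa using hxI
      · simp only [if_neg (by omega : ¬ (m + 1 + 1) = 0)]
        simp only [show m + 1 + 1 - 1 = m + 1 by omega, if_neg (by omega : ¬ m + 1 ≤ m)]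
        exact hyI
      · simp only [if_pos rfl, if_neg (by omega : ¬ (m + 1 + 1) = 0)]
        simp only [show m + 1 + 1 - 1 = m + 1 by omega, if_neg (by omega : ¬ m + 1 ≤ m)]
        exact hxy
      · intro t h1 h2
        simp only [if_neg (by omega : ¬ t = 0)]
        have ht1 : t - 1 ≤ m := by omega
        simp only [if_pos ht1]
        rcases Nat.eq_zero_or_pos (t-1) with h0 | h0
        · rw [h0, hq0]; exact haJ
        · rcases Nat.lt_or_ge (t-1) m with h3 | h3
          · exact (hqT (t-1) h0 h3).1
          · have : t - 1 = m := by omega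
            rw [this, hqm]; exact hbJ
    omega
  rcases hsub with hs | hs
  · exact S6noC4 hℓ hmono ia1 a ia2 b hiane habne
      haa1.symm haa2 (hs ia2 hia2 haa2).symm (hs ia1 hia1 haa1)
      (stab ia1 ia2 hia1 hia2) hnadj
  · exact S6noC4 hℓ hmono ib1 b ib2 a hibne (Ne.symm habne)
      hbb1.symm hbb2 (hs ib2 hib2 hbb2).symm (hs ib1 hib1 hbb1)
      (stab ib1 ib2 hib1 hib2) (fun h => hnadj h.symm)

end S6Main2

/-- In an `ℓ`-monoholed crown (`ℓ ≥ 6`) with partition `I, J`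
satisfying the crown axioms (i)-(v), every vertex of `J` has two non-adjacent
neighbors in `I`. -/
theorem stmt6 {V : Type*} [Fintype V] {ℓ : ℕ} (hℓ : 6 ≤ ℓ) (G : SimpleGraph V)
    (hmono : Monoholed G ℓ)
    (I J : Set V) (hpart : I ∪ J = Set.univ) (hdisj : Disjoint I J)
    (hI : I.Nonempty) (hJ : J.Nonempty)
    (ax1 : ¬ ∃ Z X Y : Set V, G.IsClique Z ∧ Z ∪ X ∪ Y = Set.univ ∧
      Disjoint Z X ∧ Disjoint Z Y ∧ Disjoint X Y ∧ Y.Nonempty ∧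
      (∀ x ∈ X, ∀ y ∈ Y, ¬G.Adj x y) ∧ I ⊆ X ∪ Z)
    (ax2 : ∀ (k : ℕ) (f : Fin (k+1) → V), IsInducedPathEmb G k f →
      f 0 ∈ I → f (Fin.last k) ∈ I → f 0 ≠ f (Fin.last k) →
      (∀ i : Fin (k+1), i ≠ 0 → i ≠ Fin.last k → f i ∈ J) → k = 2)
    (ax3 : ¬ ∃ a b c d : V, a ∈ I ∧ b ∈ I ∧ c ∈ I ∧ d ∈ I ∧
      a ≠ b ∧ a ≠ c ∧ a ≠ d ∧ b ≠ c ∧ b ≠ d ∧ c ≠ d ∧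
      G.Adj a b ∧ G.Adj b c ∧ G.Adj c d ∧ ¬G.Adj a c ∧ ¬G.Adj a d ∧ ¬G.Adj b d)
    (ax4 : ¬ ∃ p1 p2 p3 p4 p5 : V, p1 ∈ I ∧ p3 ∈ I ∧ p5 ∈ I ∧ p2 ∈ J ∧ p4 ∈ J ∧
      p1 ≠ p2 ∧ p1 ≠ p3 ∧ p1 ≠ p4 ∧ p1 ≠ p5 ∧ p2 ≠ p3 ∧ p2 ≠ p4 ∧ p2 ≠ p5 ∧
      p3 ≠ p4 ∧ p3 ≠ p5 ∧ p4 ≠ p5 ∧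
      G.Adj p1 p2 ∧ G.Adj p2 p3 ∧ G.Adj p3 p4 ∧ G.Adj p4 p5 ∧
      ¬G.Adj p1 p3 ∧ ¬G.Adj p1 p4 ∧ ¬G.Adj p1 p5 ∧ ¬G.Adj p2 p4 ∧ ¬G.Adj p2 p5 ∧ ¬G.Adj p3 p5)
    (ax5 : ¬ ∃ i1 i2 i3 i4 j : V, i1 ∈ I ∧ i2 ∈ I ∧ i3 ∈ I ∧ i4 ∈ I ∧ j ∈ J ∧
      i1 ≠ i2 ∧ i1 ≠ i3 ∧ i1 ≠ i4 ∧ i1 ≠ j ∧ i2 ≠ i3 ∧ i2 ≠ i4 ∧ i2 ≠ j ∧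
      i3 ≠ i4 ∧ i3 ≠ j ∧ i4 ≠ j ∧
      G.Adj j i1 ∧ G.Adj j i2 ∧ G.Adj i2 i3 ∧ G.Adj i2 i4 ∧
      ¬G.Adj j i3 ∧ ¬G.Adj j i4 ∧ ¬G.Adj i1 i2 ∧ ¬G.Adj i1 i3 ∧ ¬G.Adj i1 i4 ∧ ¬G.Adj i3 i4) :
    ∀ j ∈ J, ∃ u v : V, u ∈ I ∧ v ∈ I ∧ G.Adj j u ∧ G.Adj j v ∧ u ≠ v ∧ ¬G.Adj u v := by
  intro j hj
  classical
  have stab : ∀ u v : V, u ∈ I → v ∈ I → ¬ G.Adj u v := fun u v hu hv => S6stable ax2 hu hv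
  have hone : ∃ z ∈ I, G.Adj j z := by
    by_contra h
    push_neg at h
    exact S6hasnbr hℓ hmono hpart hdisj ax1 ax2 ax4 j hj h
  obtain ⟨z, hzI, hjz⟩ := hone
  by_cases huq : ∀ i ∈ I, G.Adj j i → i = z
  · exact absurd (S6nosingleton hℓ hmono hpart hdisj ax1 ax2 ax4 j z hj hzI hjz huq) id
  · push_neg at huq
    obtain ⟨v, hvI, hjv, hvz⟩ := huq
    exact ⟨z, v, hzI, hvI, hjz, hjv, Ne.symm hvz, stab z v hzI hvI⟩
end

section
/- Let G be a finite simple graph with no induced cycle of length four, partitioned into sets I and J, such that for every j in J the set N(j) ∩ I is not a clique. Then for every j in J, the complement of the subgraph induced by N(j) ∩ I has exactly one component with more than one vertex. -/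
/-!
Two vertices in different components of `Gᶜ` must be adjacent in `G`. So if `Gᶜ` had two
components each containing a non-edge `x a` resp. `u b` of `G`, then `x u a b` would be an
induced four-cycle of `G`. Applied to `G` restricted to `N(j) ∩ I`, this gives uniqueness;
existence is a non-edge of `G` inside `N(j) ∩ I`.
-/

namespace SimpleGraph

variable {V W : Type*} (G : SimpleGraph V)

def InducedC4Free : Prop :=
  ¬ ∃ a b c d : V, a ≠ b ∧ a ≠ c ∧ a ≠ d ∧ b ≠ c ∧ b ≠ d ∧ c ≠ d ∧
    G.Adj a b ∧ G.Adj b c ∧ G.Adj c d ∧ G.Adj d a ∧ ¬G.Adj a c ∧ ¬G.Adj b d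

variable {G}

theorem InducedC4Free.comap (hG : G.InducedC4Free) (f : W ↪ V) : (G.comap f).InducedC4Free := by
  rintro ⟨a, b, c, d, hab, hac, had, hbc, hbd, hcd, h⟩
  exact hG ⟨f a, f b, f c, f d, f.injective.ne hab, f.injective.ne hac, f.injective.ne had,
    f.injective.ne hbc, f.injective.ne hbd, f.injective.ne hcd, h⟩

theorem InducedC4Free.induce (hG : G.InducedC4Free) (s : Set V) : (G.induce s).InducedC4Free :=
  hG.comap (Function.Embedding.subtype _)

theorem induce_compl (s : Set V) : Gᶜ.induce s = (G.induce s)ᶜ := by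
  ext p q
  simp [Subtype.coe_ne_coe]

theorem exists_adj_of_connectedComponentMk_eq {H : SimpleGraph W} {x y : W} (hxy : x ≠ y)
    (h : H.connectedComponentMk x = H.connectedComponentMk y) : ∃ b, H.Adj x b := by
  obtain ⟨p⟩ := ConnectedComponent.exact h
  cases p with
  | nil => exact absurd rfl hxy
  | cons hadj _ => exact ⟨_, hadj⟩

theorem adj_of_connectedComponentMk_compl_ne {p q : V}
    (h : Gᶜ.connectedComponentMk p ≠ Gᶜ.connectedComponentMk q) : G.Adj p q := by
  by_contra hpq
  obtain rfl | hne := eq_or_ne p q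
  · exact h rfl
  · exact h (ConnectedComponent.connectedComponentMk_eq_of_adj (compl_adj G p q |>.2 ⟨hne, hpq⟩))

def ConnectedComponent.Nontrivial {H : SimpleGraph W} (c : H.ConnectedComponent) : Prop :=
  ∃ x y, x ≠ y ∧ H.connectedComponentMk x = c ∧ H.connectedComponentMk y = c

theorem InducedC4Free.eq_of_nontrivial_compl_components (hG : G.InducedC4Free)
    {c c' : Gᶜ.ConnectedComponent} (hc : c.Nontrivial) (hc' : c'.Nontrivial) : c = c' := by
  obtain ⟨x, y, hxy, rfl, hy⟩ := hc
  obtain ⟨u, v, huv, rfl, hv⟩ := hc'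
  obtain ⟨a, hxa⟩ := exists_adj_of_connectedComponentMk_eq hxy hy.symm
  obtain ⟨b, hub⟩ := exists_adj_of_connectedComponentMk_eq huv hv.symm
  have ha := (ConnectedComponent.connectedComponentMk_eq_of_adj hxa).symm
  have hb := (ConnectedComponent.connectedComponentMk_eq_of_adj hub).symm
  by_contra hne
  have hxu := adj_of_connectedComponentMk_compl_ne hne
  have hua := adj_of_connectedComponentMk_compl_ne (ha ▸ Ne.symm hne)
  have hab := adj_of_connectedComponentMk_compl_ne (ha ▸ hb ▸ hne)
  have hbx := adj_of_connectedComponentMk_compl_ne (hb ▸ Ne.symm hne)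
  rw [compl_adj] at hxa hub
  exact hG ⟨x, u, a, b, hxu.ne, hxa.1, hbx.ne.symm, hua.ne, hub.1, hab.ne,
    hxu, hua, hab, hbx, hxa.2, hub.2⟩

theorem InducedC4Free.existsUnique_nontrivial_compl_component (hG : G.InducedC4Free)
    (hG_ne_top : G ≠ ⊤) : ∃! c : Gᶜ.ConnectedComponent, c.Nontrivial := by
  obtain ⟨x, y, hxy, hnadj⟩ := ne_top_iff_exists_not_adj.1 hG_ne_top
  have hxy' : Gᶜ.Adj x y := (compl_adj G x y).2 ⟨hxy, hnadj⟩
  have hc : (Gᶜ.connectedComponentMk x).Nontrivial :=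
    ⟨x, y, hxy, rfl, (ConnectedComponent.connectedComponentMk_eq_of_adj hxy').symm⟩
  exact ⟨_, hc, fun c' hc' => hG.eq_of_nontrivial_compl_components hc' hc⟩

end SimpleGraph

open SimpleGraph in
theorem stmt7_general {V : Type*} (G : SimpleGraph V)
    (hC4 : ¬ ∃ a b c d : V, a ≠ b ∧ a ≠ c ∧ a ≠ d ∧ b ≠ c ∧ b ≠ d ∧ c ≠ d ∧
      G.Adj a b ∧ G.Adj b c ∧ G.Adj c d ∧ G.Adj d a ∧ ¬G.Adj a c ∧ ¬G.Adj b d)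
    (I J : Set V)
    (hnc : ∀ j ∈ J, ¬G.IsClique (G.neighborSet j ∩ I)) :
    ∀ j ∈ J,
      ∃! c : (Gᶜ.induce (G.neighborSet j ∩ I)).ConnectedComponent,
        ∃ x y : (G.neighborSet j ∩ I : Set V), x ≠ y ∧
          (Gᶜ.induce (G.neighborSet j ∩ I)).connectedComponentMk x = c ∧
          (Gᶜ.induce (G.neighborSet j ∩ I)).connectedComponentMk y = c := by
  intro j hj
  rw [induce_compl]
  exact (InducedC4Free.induce hC4 _).existsUnique_nontrivial_compl_component
    (mt induce_eq_top.1 (hnc j hj))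

/-- In a graph with no induced four-cycle, partitioned into `I` and `J`,
if for every `j ∈ J` the set `N(j) ∩ I` is not a clique, then the complement of the
subgraph induced on `N(j) ∩ I` has exactly one component with more than one vertex. -/
theorem stmt7 {V : Type*} [Fintype V] (G : SimpleGraph V)
    (hC4 : ¬ ∃ a b c d : V, a ≠ b ∧ a ≠ c ∧ a ≠ d ∧ b ≠ c ∧ b ≠ d ∧ c ≠ d ∧
      G.Adj a b ∧ G.Adj b c ∧ G.Adj c d ∧ G.Adj d a ∧ ¬G.Adj a c ∧ ¬G.Adj b d)
    (I J : Set V) (hpart : I ∪ J = Set.univ) (hdisj : Disjoint I J)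
    (hnc : ∀ j ∈ J, ¬G.IsClique (G.neighborSet j ∩ I)) :
    ∀ j ∈ J,
      ∃! c : (Gᶜ.induce (G.neighborSet j ∩ I)).ConnectedComponent,
        ∃ x y : (G.neighborSet j ∩ I : Set V), x ≠ y ∧
          (Gᶜ.induce (G.neighborSet j ∩ I)).connectedComponentMk x = c ∧
          (Gᶜ.induce (G.neighborSet j ∩ I)).connectedComponentMk y = c :=
  stmt7_general G hC4 I J hnc
end

section
/- Let G be a finite simple graph with no induced cycle of length four, with vertex set partitioned into sets I and J, such that every induced path between two vertices of I with interior contained in J has length exactly two. Then for any two adjacent vertices u, v in J, either N(u) ∩ I ⊆ N(v) ∩ I or N(v) ∩ I ⊆ N(u) ∩ I. -/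
/-- The non-adjacencies of an induced path force its vertices to be distinct. -/
theorem isInducedPathEmb_three {V : Type*} {G : SimpleGraph V} {a b c d : V}
    (hab : G.Adj a b) (hbc : G.Adj b c) (hcd : G.Adj c d)
    (hac : ¬G.Adj a c) (hbd : ¬G.Adj b d) (had : ¬G.Adj a d) :
    IsInducedPathEmb G 3 ![a, b, c, d] := by
  have hac' : a ≠ c := by rintro rfl; exact had hcd
  have hbd' : b ≠ d := by rintro rfl; exact had hab
  have had' : a ≠ d := by rintro rfl; exact hac hcd.symm
  refine ⟨fun i j hij => ?_, fun i j => ?_⟩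
  · fin_cases i <;> fin_cases j <;>
      simp_all [hab.ne, hbc.ne, hcd.ne, hab.ne.symm, hbc.ne.symm, hcd.ne.symm, eq_comm]
  · fin_cases i <;> fin_cases j <;>
      simp [hab, hbc, hcd, hab.symm, hbc.symm, hcd.symm, hac, hbd, had,
        mt G.adj_symm hac, mt G.adj_symm hbd, mt G.adj_symm had]

theorem stmt8_general {V : Type*} (G : SimpleGraph V)
    (hC4 : ¬ ∃ a b c d : V, a ≠ b ∧ a ≠ c ∧ a ≠ d ∧ b ≠ c ∧ b ≠ d ∧ c ≠ d ∧
      G.Adj a b ∧ G.Adj b c ∧ G.Adj c d ∧ G.Adj d a ∧ ¬G.Adj a c ∧ ¬G.Adj b d)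
    (I J : Set V) (hdisj : Disjoint I J)
    (hpath : ∀ (k : ℕ) (f : Fin (k+1) → V), IsInducedPathEmb G k f →
      f 0 ∈ I → f (Fin.last k) ∈ I → f 0 ≠ f (Fin.last k) →
      (∀ i : Fin (k+1), i ≠ 0 → i ≠ Fin.last k → f i ∈ J) → k = 2) :
    ∀ u ∈ J, ∀ v ∈ J, G.Adj u v →
      (G.neighborSet u ∩ I ⊆ G.neighborSet v ∩ I ∨
       G.neighborSet v ∩ I ⊆ G.neighborSet u ∩ I) := by
  intro u hu v hv huv
  by_contra! hcon
  obtain ⟨a, ⟨hua, haI⟩, hva⟩ := Set.not_subset.mp hcon.1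
  obtain ⟨b, ⟨hvb, hbI⟩, hub⟩ := Set.not_subset.mp hcon.2
  replace hva : ¬G.Adj v a := fun h => hva ⟨h, haI⟩
  replace hub : ¬G.Adj u b := fun h => hub ⟨h, hbI⟩
  have hab : a ≠ b := by rintro rfl; exact hub hua
  by_cases hadj : G.Adj a b
  · exact hC4 ⟨a, b, v, u, hab, hdisj.ne_of_mem haI hv, hdisj.ne_of_mem haI hu,
      hdisj.ne_of_mem hbI hv, hdisj.ne_of_mem hbI hu, huv.ne.symm, hadj, hvb.symm, huv.symm,
      hua, fun h => hva h.symm, fun h => hub h.symm⟩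
  · have hlen := hpath 3 ![a, u, v, b]
      (isInducedPathEmb_three hua.symm huv hvb (fun h => hva h.symm) hub hadj) haI hbI hab
      (fun i h0 h3 => by fin_cases i <;> simp_all)
    omega

/-- In a graph with no induced four-cycle, partitioned into `I`, `J`,
in which every induced path between two vertices of `I` with interior in `J` has
length exactly two, the neighborhoods in `I` of adjacent vertices of `J` are nested. -/
theorem stmt8 {V : Type*} [Fintype V] (G : SimpleGraph V)
    (hC4 : ¬ ∃ a b c d : V, a ≠ b ∧ a ≠ c ∧ a ≠ d ∧ b ≠ c ∧ b ≠ d ∧ c ≠ d ∧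
      G.Adj a b ∧ G.Adj b c ∧ G.Adj c d ∧ G.Adj d a ∧ ¬G.Adj a c ∧ ¬G.Adj b d)
    (I J : Set V) (hpart : I ∪ J = Set.univ) (hdisj : Disjoint I J)
    (hpath : ∀ (k : ℕ) (f : Fin (k+1) → V), IsInducedPathEmb G k f →
      f 0 ∈ I → f (Fin.last k) ∈ I → f 0 ≠ f (Fin.last k) →
      (∀ i : Fin (k+1), i ≠ 0 → i ≠ Fin.last k → f i ∈ J) → k = 2) :
    ∀ u ∈ J, ∀ v ∈ J, G.Adj u v →
      (G.neighborSet u ∩ I ⊆ G.neighborSet v ∩ I ∨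
       G.neighborSet v ∩ I ⊆ G.neighborSet u ∩ I) :=
  stmt8_general G hC4 I J hdisj hpath
end

section
/- Let G be a graph, ℓ ≥ 4, and let C be a shortest even hole of length at least ℓ in G. Let x, y be non-adjacent C-major vertices such that all neighbors of x on C are contained in a y-gap P (a subpath of C of length at least two whose ends are neighbors of y and whose interior contains no neighbor of y). Then there is an xy-gap contained in P of length at most ⌈ℓ/2⌉ − 3, where an xy-gap is a path of C whose vertex set is the interior of an induced x,y-path. -/
/-- The interior (set of internal vertices) of a path embedding. -/
def pathInterior {V : Type*} {n : ℕ} (f : Fin (n+1) → V) : Set V :=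
  f '' {i | i ≠ 0 ∧ i ≠ Fin.last n}

/-- `v` is a major vertex for the hole given by `f`. -/
def CMajor {V : Type*} (G : SimpleGraph V) (n : ℕ) (f : ZMod n → V) (v : V) : Prop :=
  v ∉ Set.range f ∧
    ¬ ∃ i : ZMod n, ∀ u ∈ Set.range f, G.Adj v u → ∃ t : ℕ, t ≤ 3 ∧ u = f (i + (t : ZMod n))

lemma succ_mod_iff {n t t' : ℕ} (ht : t < n) (ht' : t' < n) :
    t' % n = (t+1) % n ↔ (t' = t + 1 ∨ (t = n - 1 ∧ t' = 0)) := by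
  rcases Nat.lt_or_ge (t+1) n with h | h
  · rw [Nat.mod_eq_of_lt ht', Nat.mod_eq_of_lt h]
    omega
  · have hn : t + 1 = n := by omega
    rw [Nat.mod_eq_of_lt ht', hn, Nat.mod_self]
    omega

lemma hole_inj {V : Type*} {G : SimpleGraph V} {n : ℕ} {f : ZMod n → V}
    (hC : IsHoleEmb G n f) (z : ZMod n) {t t' : ℕ} (ht : t < n) (ht' : t' < n)
    (h : f (z + (t : ZMod n)) = f (z + (t' : ZMod n))) : t = t' := by
  have h2 : (t : ZMod n) = (t' : ZMod n) := by
    have := hC.2.1 h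
    exact add_left_cancel this
  rw [ZMod.natCast_eq_natCast_iff'] at h2
  rwa [Nat.mod_eq_of_lt ht, Nat.mod_eq_of_lt ht'] at h2

lemma hole_adj {V : Type*} {G : SimpleGraph V} {n : ℕ} {f : ZMod n → V}
    (hC : IsHoleEmb G n f) (z : ZMod n) {t t' : ℕ} (ht : t < n) (ht' : t' < n) :
    G.Adj (f (z + (t : ZMod n))) (f (z + (t' : ZMod n))) ↔
      (t' = t + 1 ∨ t = t' + 1 ∨ (t = n - 1 ∧ t' = 0) ∨ (t' = n - 1 ∧ t = 0)) := by
  rw [hC.2.2]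
  have e1 : (z + (t' : ZMod n) = z + (t : ZMod n) + 1) ↔ (t' % n = (t+1) % n) := by
    rw [add_assoc]
    constructor
    · intro h
      have h2 : (t' : ZMod n) = ((t + 1 : ℕ) : ZMod n) := by push_cast; exact add_left_cancel h
      rwa [ZMod.natCast_eq_natCast_iff'] at h2
    · intro h
      have h2 : (t' : ZMod n) = ((t + 1 : ℕ) : ZMod n) := by rwa [ZMod.natCast_eq_natCast_iff']
      rw [h2]; push_cast; ring
  have e2 : (z + (t : ZMod n) = z + (t' : ZMod n) + 1) ↔ (t % n = (t'+1) % n) := by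
    rw [add_assoc]
    constructor
    · intro h
      have h2 : (t : ZMod n) = ((t' + 1 : ℕ) : ZMod n) := by push_cast; exact add_left_cancel h
      rwa [ZMod.natCast_eq_natCast_iff'] at h2
    · intro h
      have h2 : (t : ZMod n) = ((t' + 1 : ℕ) : ZMod n) := by rwa [ZMod.natCast_eq_natCast_iff']
      rw [h2]; push_cast; ring
  rw [e1, e2, succ_mod_iff ht ht', succ_mod_iff ht' ht]
  tauto

lemma mkHole {V : Type*} (G : SimpleGraph V) (k : ℕ) (hk : 4 ≤ k) (h : ℕ → V)
    (hinj : ∀ p q, p < k → q < k → h p = h q → p = q)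
    (hadj : ∀ p q, p < k → q < k →
      (G.Adj (h p) (h q) ↔ (q = p + 1 ∨ p = q + 1 ∨ (p = k - 1 ∧ q = 0) ∨ (q = k - 1 ∧ p = 0)))) :
    IsHoleEmb G k (fun z : ZMod k => h z.val) := by
  haveI : NeZero k := ⟨by omega⟩
  haveI : Fact (1 < k) := ⟨by omega⟩
  have hval : ∀ z w : ZMod k, w = z + 1 ↔ w.val % k = (z.val + 1) % k := by
    intro z w
    constructor
    · intro h
      rw [h, ZMod.val_add, ZMod.val_one]
      rw [Nat.mod_eq_of_lt (Nat.mod_lt _ (by omega))]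
    · intro h
      have : ((w.val : ℕ) : ZMod k) = ((z.val + 1 : ℕ) : ZMod k) := by
        rwa [ZMod.natCast_eq_natCast_iff']
      rwa [ZMod.natCast_val, ZMod.cast_id, Nat.cast_add, ZMod.natCast_val, ZMod.cast_id,
        Nat.cast_one] at this
  refine ⟨hk, ?_, ?_⟩
  · intro z w hzw
    have := hinj z.val w.val z.val_lt w.val_lt hzw
    exact ZMod.val_injective k this
  · intro z w
    rw [hadj z.val w.val z.val_lt w.val_lt, hval z w, hval w z,
      succ_mod_iff z.val_lt w.val_lt, succ_mod_iff w.val_lt z.val_lt]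
    tauto

lemma sidePath {V : Type*} {G : SimpleGraph V} {n : ℕ} {f : ZMod n → V}
    (hC : IsHoleEmb G n f) (X Y : V) (z : ZMod n) (c : ℕ) (hcn : c + 2 ≤ n)
    (hXf : X ∉ Set.range f) (hYf : Y ∉ Set.range f) (hXY : X ≠ Y) (hXYadj : ¬G.Adj X Y)
    (hX0 : G.Adj X (f z)) (hXe : ∀ e : ℕ, 1 ≤ e → e ≤ c → ¬G.Adj X (f (z + (e : ZMod n))))
    (hYc : G.Adj Y (f (z + (c : ZMod n))))
    (hYe : ∀ e : ℕ, e < c → ¬G.Adj Y (f (z + (e : ZMod n)))) :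
    ∃ g : Fin (c+2+1) → V, IsInducedPathEmb G (c+2) g ∧ g 0 = X ∧ g (Fin.last (c+2)) = Y ∧
      pathInterior g = {u | ∃ t : ℕ, t ≤ c ∧ u = f (z + (t : ZMod n))} := by
  classical
  set g : Fin (c+2+1) → V := fun r =>
    if r.val = 0 then X else if r.val ≤ c + 1 then f (z + ((r.val - 1 : ℕ) : ZMod n)) else Y
    with hg
  have hg0 : g 0 = X := by simp [hg]
  have hglast : g (Fin.last (c+2)) = Y := by simp [hg]
  have hgmid : ∀ r : Fin (c+2+1), 1 ≤ r.val → r.val ≤ c + 1 →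
      g r = f (z + ((r.val - 1 : ℕ) : ZMod n)) := by
    intro r h1 h2
    simp only [hg]
    rw [if_neg (by omega), if_pos h2]
  -- X adjacency characterization
  have hXadj : ∀ e : ℕ, e ≤ c → (G.Adj X (f (z + (e : ZMod n))) ↔ e = 0) := by
    intro e he
    constructor
    · intro h
      by_contra h0
      exact hXe e (by omega) he h
    · intro h; subst h; simpa using hX0
  have hYadj : ∀ e : ℕ, e ≤ c → (G.Adj Y (f (z + (e : ZMod n))) ↔ e = c) := by
    intro e he
    constructor
    · intro h
      by_contra h0
      exact hYe e (by omega) h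
    · intro h; subst h; exact hYc
  have key : ∀ r q : Fin (c+2+1),
      G.Adj (g r) (g q) ↔ ((r : ℕ) + 1 = (q : ℕ) ∨ (q : ℕ) + 1 = (r : ℕ)) := by
    have main : ∀ r q : Fin (c+2+1), r.val ≤ q.val →
        (G.Adj (g r) (g q) ↔ ((r : ℕ) + 1 = (q : ℕ) ∨ (q : ℕ) + 1 = (r : ℕ))) := by
      intro r q hle
      have hr := r.isLt
      have hq := q.isLt
      rcases Nat.eq_zero_or_pos r.val with hr0 | hr1
      · -- r = 0
        have hgr : g r = X := by simp only [hg]; rw [if_pos hr0]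
        rcases Nat.eq_zero_or_pos q.val with hq0 | hq1
        · have hgq : g q = X := by simp only [hg]; rw [if_pos hq0]
          rw [hgr, hgq]
          constructor
          · intro h; exact absurd h (G.loopless.irrefl X)
          · intro h; omega
        · rcases Nat.lt_or_ge q.val (c+2) with hqc | hqc
          · rw [hgr, hgmid q hq1 (by omega), hXadj _ (by omega)]
            omega
          · have hgq : g q = Y := by
              simp only [hg]; rw [if_neg (by omega), if_neg (by omega)]
            rw [hgr, hgq]
            constructor
            · intro h; exact absurd h hXYadj
            · intro h; omega
      · have hq1 : 1 ≤ q.val := by omega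
        rcases Nat.lt_or_ge q.val (c+2) with hqc | hqc
        · -- both middle
          rw [hgmid r hr1 (by omega), hgmid q hq1 (by omega),
            hole_adj hC z (by omega) (by omega)]
          omega
        · -- q = last
          have hgq : g q = Y := by
            simp only [hg]; rw [if_neg (by omega), if_neg (by omega)]
          rcases Nat.lt_or_ge r.val (c+2) with hrc | hrc
          · rw [hgmid r hr1 (by omega), hgq, G.adj_comm, hYadj _ (by omega)]
            omega
          · rw [hgq]
            have hgr : g r = Y := by
              simp only [hg]; rw [if_neg (by omega), if_neg (by omega)]
            rw [hgr]
            constructor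
            · intro h; exact absurd h (G.loopless.irrefl Y)
            · intro h; omega
    intro r q
    rcases Nat.le_total r.val q.val with h | h
    · exact main r q h
    · rw [G.adj_comm, main q r h]; tauto
  have hinj : Function.Injective g := by
    intro r q hrq
    have hr := r.isLt
    have hq := q.isLt
    apply Fin.ext
    rcases Nat.eq_zero_or_pos r.val with hr0 | hr1 <;>
      rcases Nat.eq_zero_or_pos q.val with hq0 | hq1
    · omega
    · -- r = 0, q > 0
      have hgr : g r = X := by simp only [hg]; rw [if_pos hr0]
      rcases Nat.lt_or_ge q.val (c+2) with hqc | hqc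
      · rw [hgr, hgmid q hq1 (by omega)] at hrq
        exact absurd ⟨_, hrq.symm⟩ hXf
      · have hgq : g q = Y := by
          simp only [hg]; rw [if_neg (by omega), if_neg (by omega)]
        rw [hgr, hgq] at hrq
        exact absurd hrq hXY
    · have hgq : g q = X := by simp only [hg]; rw [if_pos hq0]
      rcases Nat.lt_or_ge r.val (c+2) with hrc | hrc
      · rw [hgq, hgmid r hr1 (by omega)] at hrq
        exact absurd ⟨_, hrq⟩ hXf
      · have hgr : g r = Y := by
          simp only [hg]; rw [if_neg (by omega), if_neg (by omega)]
        rw [hgq, hgr] at hrq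
        exact absurd hrq.symm hXY
    · rcases Nat.lt_or_ge r.val (c+2) with hrc | hrc <;>
        rcases Nat.lt_or_ge q.val (c+2) with hqc | hqc
      · rw [hgmid r hr1 (by omega), hgmid q hq1 (by omega)] at hrq
        have := hole_inj hC z (t := r.val - 1) (t' := q.val - 1) (by omega) (by omega) hrq
        omega
      · have hgq : g q = Y := by
          simp only [hg]; rw [if_neg (by omega), if_neg (by omega)]
        rw [hgmid r hr1 (by omega), hgq] at hrq
        exact absurd ⟨_, hrq⟩ hYf
      · have hgr : g r = Y := by
          simp only [hg]; rw [if_neg (by omega), if_neg (by omega)]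
        rw [hgr, hgmid q hq1 (by omega)] at hrq
        exact absurd ⟨_, hrq.symm⟩ hYf
      · omega
  refine ⟨g, ⟨hinj, key⟩, hg0, hglast, ?_⟩
  ext u
  constructor
  · rintro ⟨r, ⟨hr0, hrl⟩, rfl⟩
    have hr := r.isLt
    have h1 : 1 ≤ r.val := by
      rcases Nat.eq_zero_or_pos r.val with h | h
      · exact absurd (Fin.ext h) hr0
      · exact h
    have h2 : r.val ≤ c + 1 := by
      rcases Nat.lt_or_ge r.val (c+2) with h | h
      · omega
      · exfalso; apply hrl; apply Fin.ext; simp [Fin.last]; omega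
    exact ⟨r.val - 1, by omega, by rw [hgmid r h1 h2]⟩
  · rintro ⟨t, ht, rfl⟩
    refine ⟨⟨t + 1, by omega⟩, ⟨?_, ?_⟩, ?_⟩
    · intro h
      have := Fin.val_eq_of_eq h
      simp at this
    · intro h
      have := Fin.val_eq_of_eq h
      simp [Fin.last] at this
      omega
    · rw [hgmid ⟨t+1, by omega⟩ (by simp) (by simp; omega)]
      simp

lemma pathRev {V : Type*} {G : SimpleGraph V} {s' : ℕ} {g : Fin (s'+1) → V}
    (h : IsInducedPathEmb G s' g) :
    IsInducedPathEmb G s' (g ∘ Fin.rev) ∧ (g ∘ Fin.rev) 0 = g (Fin.last s') ∧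
      (g ∘ Fin.rev) (Fin.last s') = g 0 ∧ pathInterior (g ∘ Fin.rev) = pathInterior g := by
  have hrev : ∀ r : Fin (s'+1), (Fin.rev r).val = s' - r.val := by
    intro r; rw [Fin.val_rev]; omega
  have hmem : ∀ r : Fin (s'+1), (r ≠ 0 ∧ r ≠ Fin.last s') ↔ (r.val ≠ 0 ∧ r.val ≠ s') := by
    intro r
    rw [Ne, Ne, Fin.ext_iff, Fin.ext_iff, Fin.val_zero, Fin.val_last]
  refine ⟨⟨h.1.comp Fin.rev_injective, ?_⟩, ?_, ?_, ?_⟩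
  · intro r q
    simp only [Function.comp]
    rw [h.2, hrev, hrev]
    have := r.isLt
    have := q.isLt
    omega
  · show g (Fin.rev 0) = g (Fin.last s')
    rw [Fin.rev_zero]
  · show g (Fin.rev (Fin.last s')) = g 0
    rw [Fin.rev_last]
  · unfold pathInterior
    rw [Set.image_comp]
    have himg : Fin.rev '' {r : Fin (s'+1) | r ≠ 0 ∧ r ≠ Fin.last s'}
        = {r : Fin (s'+1) | r ≠ 0 ∧ r ≠ Fin.last s'} := by
      ext r
      simp only [Set.mem_image, Set.mem_setOf_eq]
      constructor
      · rintro ⟨q, hq, rfl⟩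
        rw [hmem] at hq ⊢
        rw [hrev]
        have := q.isLt
        omega
      · intro hr
        refine ⟨Fin.rev r, ?_, Fin.rev_rev r⟩
        rw [hmem] at hr ⊢
        rw [hrev]
        have := r.isLt
        omega
    rw [himg]

set_option maxHeartbeats 1600000 in
/-- Let `C` be a shortest even hole of length at least `ℓ` and let
`x, y` be non-adjacent `C`-major vertices with all neighbors of `x` on `C` inside
a `y`-gap `P` (the subpath of `C` from `f i` to `f (i+m)`).  Then `P` contains an
`xy`-gap of length at most `⌈ℓ/2⌉ - 3`: a subpath of `C` whose vertex set is the
interior of an induced `x,y`-path. -/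
theorem stmt11 {V : Type*} [Fintype V] {ℓ : ℕ} (hℓ : 4 ≤ ℓ) (G : SimpleGraph V)
    {n : ℕ} {f : ZMod n → V} (hC : IsHoleEmb G n f) (heven : Even n) (hlong : ℓ ≤ n)
    (hshortest : ∀ (m : ℕ) (g : ZMod m → V), IsHoleEmb G m g → Even m → ℓ ≤ m → n ≤ m)
    {x y : V} (hx : CMajor G n f x) (hy : CMajor G n f y)
    (hxy : x ≠ y) (hnadj : ¬G.Adj x y)
    {i : ZMod n} {m : ℕ} (hm2 : 2 ≤ m) (hmn : m < n)
    (hyi : G.Adj y (f i)) (hym : G.Adj y (f (i + (m : ZMod n))))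
    (hyint : ∀ t : ℕ, 0 < t → t < m → ¬G.Adj y (f (i + (t : ZMod n))))
    (hxin : ∀ u ∈ Set.range f, G.Adj x u → ∃ t : ℕ, t ≤ m ∧ u = f (i + (t : ZMod n))) :
    ∃ (j : ZMod n) (s : ℕ), s ≤ (ℓ + 1) / 2 - 3 ∧
      (∀ t : ℕ, t ≤ s → ∃ t' : ℕ, t' ≤ m ∧ j + (t : ZMod n) = i + (t' : ZMod n)) ∧
      ∃ (s' : ℕ) (g : Fin (s'+1) → V), IsInducedPathEmb G s' g ∧
        g 0 = x ∧ g (Fin.last s') = y ∧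
        pathInterior g = {u | ∃ t : ℕ, t ≤ s ∧ u = f (j + (t : ZMod n))} := by

  classical
  have hn4 : 4 ≤ n := hC.1
  haveI : NeZero n := ⟨by omega⟩
  have hn2 : n % 2 = 0 := Nat.even_iff.mp heven
  -- m + 4 ≤ n, else y is not C-major
  have hmn4 : m + 4 ≤ n := by
    by_contra hcon
    apply hy.2
    refine ⟨i + (m : ZMod n), ?_⟩
    rintro u ⟨s, rfl⟩ hadj
    set t := (s - i).val with htdef
    have hs : s = i + (t : ZMod n) := by
      rw [htdef, ZMod.natCast_val, ZMod.cast_id]; ring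
    have htn : t < n := ZMod.val_lt _
    rw [hs] at hadj ⊢
    rcases Nat.eq_zero_or_pos t with h0 | h0
    · refine ⟨n - m, by omega, ?_⟩
      have harith : ((m : ZMod n) + ((n - m : ℕ) : ZMod n)) = ((0:ℕ) : ZMod n) := by
        rw [← Nat.cast_add]
        have : m + (n - m) = n := by omega
        rw [Nat.cast_zero]
        have h2 : ((m + (n - m) : ℕ) : ZMod n) = ((n:ℕ) : ZMod n) := by rw [this]
        rw [h2, ZMod.natCast_self]
      rw [h0, add_assoc, harith]
    · rcases Nat.lt_or_ge t m with h1 | h1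
      · exact absurd hadj (hyint t h0 h1)
      · refine ⟨t - m, by omega, ?_⟩
        have harith : (t : ZMod n) = (m : ZMod n) + ((t - m : ℕ) : ZMod n) := by
          rw [← Nat.cast_add]
          congr 1
          omega
        rw [harith, add_assoc]
  -- the set of neighbor-offsets of x
  set T : Finset ℕ := (Finset.range (m+1)).filter (fun t => G.Adj x (f (i + (t : ZMod n))))
    with hTdef
  have hTmem : ∀ t : ℕ, t ∈ T ↔ (t ≤ m ∧ G.Adj x (f (i + (t : ZMod n)))) := by
    intro t
    rw [hTdef, Finset.mem_filter, Finset.mem_range]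
    constructor
    · rintro ⟨h1, h2⟩; exact ⟨by omega, h2⟩
    · rintro ⟨h1, h2⟩; exact ⟨by omega, h2⟩
  have hTne : T.Nonempty := by
    have h2 := hx.2
    push_neg at h2
    obtain ⟨u, hu, hadj, -⟩ := h2 i
    obtain ⟨t, htm, rfl⟩ := hxin u hu hadj
    exact ⟨t, (hTmem t).mpr ⟨htm, hadj⟩⟩
  set t1 := T.min' hTne with ht1def
  set t2 := T.max' hTne with ht2def
  have ht1T : t1 ∈ T := T.min'_mem hTne
  have ht2T : t2 ∈ T := T.max'_mem hTne
  have ht1m : t1 ≤ m := ((hTmem t1).mp ht1T).1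
  have ht2m : t2 ≤ m := ((hTmem t2).mp ht2T).1
  have hxt1 : G.Adj x (f (i + (t1 : ZMod n))) := ((hTmem t1).mp ht1T).2
  have hxt2 : G.Adj x (f (i + (t2 : ZMod n))) := ((hTmem t2).mp ht2T).2
  have hxbd : ∀ t : ℕ, t < n → G.Adj x (f (i + (t : ZMod n))) → t1 ≤ t ∧ t ≤ t2 := by
    intro t htn hadj
    obtain ⟨t', ht'm, heq⟩ := hxin _ ⟨i + (t : ZMod n), rfl⟩ hadj
    have : t = t' := hole_inj hC i htn (by omega) heq
    subst this
    have htT : t ∈ T := (hTmem t).mpr ⟨ht'm, hadj⟩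
    exact ⟨T.min'_le t htT, T.le_max' t htT⟩
  -- t2 - t1 ≥ 4, else x is not C-major
  have hd4 : t1 + 4 ≤ t2 := by
    by_contra hcon
    apply hx.2
    refine ⟨i + (t1 : ZMod n), ?_⟩
    rintro u hu hadj
    obtain ⟨t, htm, rfl⟩ := hxin u hu hadj
    have hbd := hxbd t (by omega) hadj
    refine ⟨t - t1, by omega, ?_⟩
    have harith : (t : ZMod n) = (t1 : ZMod n) + ((t - t1 : ℕ) : ZMod n) := by
      rw [← Nat.cast_add]
      congr 1
      omega
    rw [harith, add_assoc]
  -- y's adjacency on P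
  have hyiff : ∀ t : ℕ, t ≤ m → (G.Adj y (f (i + (t : ZMod n))) ↔ (t = 0 ∨ t = m)) := by
    intro t htm
    constructor
    · intro hadj
      by_contra hcon
      exact hyint t (by omega) (by omega) hadj
    · rintro (rfl | rfl)
      · simpa using hyi
      · exact hym
  by_cases hA : t1 ≤ (ℓ + 1) / 2 - 3
  · -- use the near side of P : path x - f(i+t1) - ... - f(i) - y
    obtain ⟨g, hg, hg0, hglast, hgint⟩ := sidePath hC y x i t1 (by omega)
      hy.1 hx.1 (Ne.symm hxy) (fun h => hnadj h.symm)
      (by simpa using hyi)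
      (fun e he1 he2 h => hyint e (by omega) (by omega) h)
      hxt1
      (fun e he h => by
        have := hxbd e (by omega) h
        omega)
    obtain ⟨hrev, hrev0, hrevlast, hrevint⟩ := pathRev hg
    refine ⟨i, t1, hA, ?_, t1 + 2, g ∘ Fin.rev, hrev, ?_, ?_, ?_⟩
    · intro t ht
      exact ⟨t, by omega, rfl⟩
    · rw [hrev0, hglast]
    · rw [hrevlast, hg0]
    · rw [hrevint, hgint]
  · by_cases hB : m - t2 ≤ (ℓ + 1) / 2 - 3
    · -- use the far side of P : path x - f(i+t2) - ... - f(i+m) - y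
      set z2 : ZMod n := i + (t2 : ZMod n) with hz2def
      have hz2 : ∀ e : ℕ, z2 + (e : ZMod n) = i + ((t2 + e : ℕ) : ZMod n) := by
        intro e
        rw [hz2def, Nat.cast_add, add_assoc]
      obtain ⟨g, hg, hg0, hglast, hgint⟩ := sidePath hC x y z2 (m - t2) (by omega)
        hx.1 hy.1 hxy hnadj
        (by simpa using hxt2)
        (fun e he1 he2 h => by
          rw [hz2 e] at h
          have := hxbd (t2 + e) (by omega) h
          omega)
        (by
          rw [hz2 (m - t2)]
          have : t2 + (m - t2) = m := by omega
          rw [this]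
          exact hym)
        (fun e he h => by
          rw [hz2 e] at h
          rw [hyiff (t2 + e) (by omega)] at h
          omega)
      refine ⟨z2, m - t2, hB, ?_, (m - t2) + 2, g, hg, hg0, hglast, hgint⟩
      intro t ht
      exact ⟨t2 + t, by omega, hz2 t⟩
    · -- contradiction branch
      exfalso
      have ha1 : 1 ≤ t1 := by omega
      have hb1 : 1 ≤ m - t2 := by omega
      -- Hole H4 : x, f(i+t1), ..., f(i), y, f(i+m), ..., f(i+t2); length t1+(m-t2)+4
      set k4 : ℕ := t1 + (m - t2) + 4 with hk4def
      have hH4 : IsHoleEmb G k4 (fun z : ZMod k4 => (fun p : ℕ =>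
          if p = 0 then x else if p ≤ t1 + 1 then f (i + ((t1 + 1 - p : ℕ) : ZMod n))
          else if p = t1 + 2 then y else f (i + ((m + t1 + 3 - p : ℕ) : ZMod n))) z.val) := by
        set h4 : ℕ → V := fun p =>
          if p = 0 then x else if p ≤ t1 + 1 then f (i + ((t1 + 1 - p : ℕ) : ZMod n))
          else if p = t1 + 2 then y else f (i + ((m + t1 + 3 - p : ℕ) : ZMod n)) with hh4
        have at0 : h4 0 = x := by simp [hh4]
        have atA : ∀ p, 1 ≤ p → p ≤ t1 + 1 → h4 p = f (i + ((t1 + 1 - p : ℕ) : ZMod n)) := by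
          intro p h1 h2
          simp only [hh4]
          rw [if_neg (by omega), if_pos h2]
        have atB : h4 (t1 + 2) = y := by
          simp only [hh4]
          rw [if_neg (by omega), if_neg (by omega)]
          simp
        have atC : ∀ p, t1 + 3 ≤ p → h4 p = f (i + ((m + t1 + 3 - p : ℕ) : ZMod n)) := by
          intro p h1
          simp only [hh4]
          rw [if_neg (by omega), if_neg (by omega), if_neg (by omega)]
        apply mkHole G k4 (by omega) h4
        · -- injectivity
          intro p q hp hq heq
          have seg : ∀ r : ℕ, r < k4 → r = 0 ∨ (1 ≤ r ∧ r ≤ t1 + 1) ∨ r = t1 + 2 ∨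
              (t1 + 3 ≤ r ∧ r < k4) := by intro r hr; omega
          rcases seg p hp with hp0 | hpA | hpB | hpC <;>
            rcases seg q hq with hq0 | hqA | hqB | hqC
          · omega
          · subst hp0; rw [at0, atA q hqA.1 hqA.2] at heq
            exact absurd ⟨_, heq.symm⟩ hx.1
          · subst hp0; subst hqB; rw [at0, atB] at heq; exact absurd heq hxy
          · subst hp0; rw [at0, atC q hqC.1] at heq
            exact absurd ⟨_, heq.symm⟩ hx.1
          · subst hq0; rw [at0, atA p hpA.1 hpA.2] at heq
            exact absurd ⟨_, heq⟩ hx.1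
          · rw [atA p hpA.1 hpA.2, atA q hqA.1 hqA.2] at heq
            have := hole_inj hC i (t := t1 + 1 - p) (t' := t1 + 1 - q)
              (by omega) (by omega) heq
            omega
          · subst hqB; rw [atA p hpA.1 hpA.2, atB] at heq
            exact absurd ⟨_, heq⟩ hy.1
          · rw [atA p hpA.1 hpA.2, atC q hqC.1] at heq
            have := hole_inj hC i (t := t1 + 1 - p) (t' := m + t1 + 3 - q)
              (by omega) (by omega) heq
            omega
          · subst hpB; subst hq0; rw [atB, at0] at heq; exact absurd heq.symm hxy
          · subst hpB; rw [atB, atA q hqA.1 hqA.2] at heq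
            exact absurd ⟨_, heq.symm⟩ hy.1
          · omega
          · subst hpB; rw [atB, atC q hqC.1] at heq
            exact absurd ⟨_, heq.symm⟩ hy.1
          · subst hq0; rw [at0, atC p hpC.1] at heq
            exact absurd ⟨_, heq⟩ hx.1
          · rw [atC p hpC.1, atA q hqA.1 hqA.2] at heq
            have := hole_inj hC i (t := m + t1 + 3 - p) (t' := t1 + 1 - q)
              (by omega) (by omega) heq
            omega
          · subst hqB; rw [atC p hpC.1, atB] at heq
            exact absurd ⟨_, heq⟩ hy.1
          · rw [atC p hpC.1, atC q hqC.1] at heq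
            have := hole_inj hC i (t := m + t1 + 3 - p) (t' := m + t1 + 3 - q)
              (by omega) (by omega) heq
            omega
        · -- adjacency
          have main : ∀ p q, p < k4 → q < k4 → p ≤ q →
              (G.Adj (h4 p) (h4 q) ↔ (q = p + 1 ∨ p = q + 1 ∨ (p = k4 - 1 ∧ q = 0) ∨
                (q = k4 - 1 ∧ p = 0))) := by
            intro p q hp hq hpq
            have seg : ∀ r : ℕ, r < k4 → r = 0 ∨ (1 ≤ r ∧ r ≤ t1 + 1) ∨ r = t1 + 2 ∨
                (t1 + 3 ≤ r ∧ r < k4) := by intro r hr; omega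
            rcases seg p hp with hp0 | hpA | hpB | hpC <;>
              rcases seg q hq with hq0 | hqA | hqB | hqC
            · -- 0, 0
              subst hp0; subst hq0; rw [at0]
              constructor
              · intro h; exact absurd h (G.loopless.irrefl x)
              · intro h; omega
            · -- 0, A : x vs f(i + (t1+1-q))
              subst hp0; rw [at0, atA q hqA.1 hqA.2]
              constructor
              · intro h
                have := hxbd _ (by omega) h
                omega
              · intro h
                rcases h with h | h | h | h
                · subst h
                  have h2 : t1 + 1 - (0 + 1) = t1 := by omega
                  rw [h2]
                  exact hxt1
                · exfalso; omega
                · exfalso; omega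
                · exfalso; omega
            · -- 0, B : x vs y
              subst hp0; subst hqB; rw [at0, atB]
              constructor
              · intro h; exact absurd h hnadj
              · intro h; omega
            · -- 0, C : x vs f(i + (m+t1+3-q))
              subst hp0; rw [at0, atC q hqC.1]
              constructor
              · intro h
                have := hxbd _ (by omega) h
                omega
              · intro h
                rcases h with h | h | h | h
                · exfalso; omega
                · exfalso; omega
                · exfalso; omega
                · have h2 : m + t1 + 3 - q = t2 := by omega
                  rw [h2]
                  exact hxt2
            · exfalso; omega
            · -- A, A
              rw [atA p hpA.1 hpA.2, atA q hqA.1 hqA.2,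
                hole_adj hC i (by omega) (by omega)]
              omega
            · -- A, B : f vs y
              subst hqB; rw [atA p hpA.1 hpA.2, atB, G.adj_comm,
                hyiff (t1 + 1 - p) (by omega)]
              omega
            · -- A, C : f vs f
              rw [atA p hpA.1 hpA.2, atC q hqC.1, hole_adj hC i (by omega) (by omega)]
              omega
            · exfalso; omega
            · exfalso; omega
            · -- B, B
              subst hpB; subst hqB; rw [atB]
              constructor
              · intro h; exact absurd h (G.loopless.irrefl y)
              · intro h; omega
            · -- B, C : y vs f(i + (m+t1+3-q))
              subst hpB; rw [atB, atC q hqC.1, hyiff (m + t1 + 3 - q) (by omega)]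
              omega
            · exfalso; omega
            · exfalso; omega
            · exfalso; omega
            · -- C, C
              rw [atC p hpC.1, atC q hqC.1, hole_adj hC i (by omega) (by omega)]
              omega
          intro p q hp hq
          rcases Nat.le_total p q with h | h
          · exact main p q hp hq h
          · rw [G.adj_comm, main q p hq hp h]
            tauto
      -- H4 must be odd
      have habodd : (t1 + (m - t2)) % 2 = 1 := by
        rcases Nat.even_or_odd (t1 + (m - t2)) with hev | hodd
        · exfalso
          have hke : Even k4 := by
            rw [Nat.even_iff] at hev ⊢
            omega
          have hkl : ℓ ≤ k4 := by omega
          have := hshortest k4 _ hH4 hke hkl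
          omega
        · rw [Nat.odd_iff] at hodd
          omega
      -- Hole Hy : y together with P ; length m + 2
      have hHy : IsHoleEmb G (m + 2) (fun z : ZMod (m+2) => (fun p : ℕ =>
          if p = 0 then y else f (i + ((p - 1 : ℕ) : ZMod n))) z.val) := by
        set hy4 : ℕ → V := fun p => if p = 0 then y else f (i + ((p - 1 : ℕ) : ZMod n))
          with hhy4
        have at0 : hy4 0 = y := by simp [hhy4]
        have atA : ∀ p, 1 ≤ p → hy4 p = f (i + ((p - 1 : ℕ) : ZMod n)) := by
          intro p h1
          simp only [hhy4]
          rw [if_neg (by omega)]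
        apply mkHole G (m+2) (by omega) hy4
        · intro p q hp hq heq
          rcases Nat.eq_zero_or_pos p with hp0 | hp1 <;>
            rcases Nat.eq_zero_or_pos q with hq0 | hq1
          · omega
          · subst hp0; rw [at0, atA q hq1] at heq
            exact absurd ⟨_, heq.symm⟩ hy.1
          · subst hq0; rw [at0, atA p hp1] at heq
            exact absurd ⟨_, heq⟩ hy.1
          · rw [atA p hp1, atA q hq1] at heq
            have := hole_inj hC i (t := p - 1) (t' := q - 1) (by omega) (by omega) heq
            omega
        · have main : ∀ p q, p < m + 2 → q < m + 2 → p ≤ q →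
              (G.Adj (hy4 p) (hy4 q) ↔ (q = p + 1 ∨ p = q + 1 ∨ (p = m + 2 - 1 ∧ q = 0) ∨
                (q = m + 2 - 1 ∧ p = 0))) := by
            intro p q hp hq hpq
            rcases Nat.eq_zero_or_pos p with hp0 | hp1
            · subst hp0
              rcases Nat.eq_zero_or_pos q with hq0 | hq1
              · subst hq0; rw [at0]
                constructor
                · intro h; exact absurd h (G.loopless.irrefl y)
                · intro h; omega
              · rw [at0, atA q hq1, hyiff (q - 1) (by omega)]
                omega
            · rw [atA p hp1, atA q (by omega), hole_adj hC i (by omega) (by omega)]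
              omega
          intro p q hp hq
          rcases Nat.le_total p q with h | h
          · exact main p q hp hq h
          · rw [G.adj_comm, main q p hq hp h]
            tauto
      -- m must be odd
      have hmodd : m % 2 = 1 := by
        rcases Nat.even_or_odd m with hev | hodd
        · exfalso
          have hke : Even (m + 2) := by
            rw [Nat.even_iff] at hev ⊢
            omega
          have hkl : ℓ ≤ m + 2 := by omega
          have := hshortest (m+2) _ hHy hke hkl
          omega
        · rw [Nat.odd_iff] at hodd
          omega
      -- Hole H2 : x together with the long arc ; length n - (t2 - t1) + 2
      set z2 : ZMod n := i + (t2 : ZMod n) with hz2def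
      have hz2 : ∀ e : ℕ, z2 + (e : ZMod n) = i + ((t2 + e : ℕ) : ZMod n) := by
        intro e
        rw [hz2def, Nat.cast_add, add_assoc]
      set k2 : ℕ := n - (t2 - t1) + 2 with hk2def
      have hxz2 : ∀ e : ℕ, e ≤ n - (t2 - t1) →
          (G.Adj x (f (z2 + (e : ZMod n))) ↔ (e = 0 ∨ e = n - (t2 - t1))) := by
        intro e he
        constructor
        · intro h
          rw [hz2 e] at h
          rcases Nat.lt_or_ge (t2 + e) n with h1 | h1
          · have := hxbd (t2 + e) h1 h
            omega
          · have harith : i + ((t2 + e : ℕ) : ZMod n) = i + ((t2 + e - n : ℕ) : ZMod n) := by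
              have h3 : t2 + e = (t2 + e - n) + n := by omega
              have h4 : ((t2 + e : ℕ) : ZMod n) = (((t2 + e - n) + n : ℕ) : ZMod n) := by
                rw [← h3]
              rw [h4, Nat.cast_add, ZMod.natCast_self, add_zero]
            rw [harith] at h
            have := hxbd (t2 + e - n) (by omega) h
            omega
        · rintro (rfl | rfl)
          · simpa using hxt2
          · rw [hz2]
            have harith : i + ((t2 + (n - (t2 - t1)) : ℕ) : ZMod n)
                = i + ((t1 : ℕ) : ZMod n) := by
              congr 1
              have : t2 + (n - (t2 - t1)) = t1 + n := by omega
              rw [this, Nat.cast_add, ZMod.natCast_self, add_zero]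
            rw [harith]
            exact hxt1
      have hH2 : IsHoleEmb G k2 (fun z : ZMod k2 => (fun p : ℕ =>
          if p = 0 then x else f (z2 + ((p - 1 : ℕ) : ZMod n))) z.val) := by
        set h2 : ℕ → V := fun p => if p = 0 then x else f (z2 + ((p - 1 : ℕ) : ZMod n))
          with hh2
        have at0 : h2 0 = x := by simp [hh2]
        have atA : ∀ p, 1 ≤ p → h2 p = f (z2 + ((p - 1 : ℕ) : ZMod n)) := by
          intro p h1
          simp only [hh2]
          rw [if_neg (by omega)]
        apply mkHole G k2 (by omega) h2
        · intro p q hp hq heq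
          rcases Nat.eq_zero_or_pos p with hp0 | hp1 <;>
            rcases Nat.eq_zero_or_pos q with hq0 | hq1
          · omega
          · subst hp0; rw [at0, atA q hq1] at heq
            exact absurd ⟨_, heq.symm⟩ hx.1
          · subst hq0; rw [at0, atA p hp1] at heq
            exact absurd ⟨_, heq⟩ hx.1
          · rw [atA p hp1, atA q hq1] at heq
            have := hole_inj hC z2 (t := p - 1) (t' := q - 1) (by omega) (by omega) heq
            omega
        · have main : ∀ p q, p < k2 → q < k2 → p ≤ q →
              (G.Adj (h2 p) (h2 q) ↔ (q = p + 1 ∨ p = q + 1 ∨ (p = k2 - 1 ∧ q = 0) ∨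
                (q = k2 - 1 ∧ p = 0))) := by
            intro p q hp hq hpq
            rcases Nat.eq_zero_or_pos p with hp0 | hp1
            · subst hp0
              rcases Nat.eq_zero_or_pos q with hq0 | hq1
              · subst hq0; rw [at0]
                constructor
                · intro h; exact absurd h (G.loopless.irrefl x)
                · intro h; omega
              · rw [at0, atA q hq1, hxz2 (q - 1) (by omega)]
                omega
            · rw [atA p hp1, atA q (by omega), hole_adj hC z2 (by omega) (by omega)]
              omega
          intro p q hp hq
          rcases Nat.le_total p q with h | h
          · exact main p q hp hq h
          · rw [G.adj_comm, main q p hq hp h]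
            tauto
      -- final contradiction
      have hk2e : Even k2 := by
        rw [Nat.even_iff]
        omega
      rcases Nat.lt_or_ge k2 ℓ with hkl | hkl
      · omega
      · have := hshortest k2 _ hH2 hk2e hkl
        omega
end

section
/- Let ℓ ≥ 6 and let G be an ℓ-monoholed graph that is a crown with partition I, J (satisfying crown axioms (i)–(v)). For every j in J, let g(j) denote the vertex set of the unique nontrivial anticomponent of N(j) ∩ I. Then for any two non-adjacent vertices u, v in J, u has no neighbor in g(v) and v has no neighbor in g(u). -/
lemma hole4 {V : Type*} (G : SimpleGraph V) {a b c d : V}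
    (hac : a ≠ c) (hbd : b ≠ d)
    (hab : G.Adj a b) (hbc : G.Adj b c) (hcd : G.Adj c d) (hda : G.Adj d a)
    (nac : ¬G.Adj a c) (nbd : ¬G.Adj b d) :
    IsHoleEmb G 4 ![a, b, c, d] := by
  have hab' := hab.ne
  have hbc' := hbc.ne
  have hcd' := hcd.ne
  have hda' := hda.ne
  refine ⟨le_refl _, ?inj, ?adj⟩
  case inj =>
    intro i j h
    fin_cases i <;> fin_cases j <;> simp_all <;> rfl
  case adj =>
    intro i j
    fin_cases i <;> fin_cases j
    · exact iff_of_false (G.irrefl ·) (by decide : ¬((0:ZMod 4) = (0:ZMod 4) + 1 ∨ (0:ZMod 4) = (0:ZMod 4) + 1))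
    · exact iff_of_true hab (by decide : ((1:ZMod 4) = (0:ZMod 4) + 1 ∨ (0:ZMod 4) = (1:ZMod 4) + 1))
    · exact iff_of_false nac (by decide : ¬((2:ZMod 4) = (0:ZMod 4) + 1 ∨ (0:ZMod 4) = (2:ZMod 4) + 1))
    · exact iff_of_true hda.symm (by decide : ((3:ZMod 4) = (0:ZMod 4) + 1 ∨ (0:ZMod 4) = (3:ZMod 4) + 1))
    · exact iff_of_true hab.symm (by decide : ((0:ZMod 4) = (1:ZMod 4) + 1 ∨ (1:ZMod 4) = (0:ZMod 4) + 1))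
    · exact iff_of_false (G.irrefl ·) (by decide : ¬((1:ZMod 4) = (1:ZMod 4) + 1 ∨ (1:ZMod 4) = (1:ZMod 4) + 1))
    · exact iff_of_true hbc (by decide : ((2:ZMod 4) = (1:ZMod 4) + 1 ∨ (1:ZMod 4) = (2:ZMod 4) + 1))
    · exact iff_of_false nbd (by decide : ¬((3:ZMod 4) = (1:ZMod 4) + 1 ∨ (1:ZMod 4) = (3:ZMod 4) + 1))
    · exact iff_of_false (fun h => nac h.symm) (by decide : ¬((0:ZMod 4) = (2:ZMod 4) + 1 ∨ (2:ZMod 4) = (0:ZMod 4) + 1))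
    · exact iff_of_true hbc.symm (by decide : ((1:ZMod 4) = (2:ZMod 4) + 1 ∨ (2:ZMod 4) = (1:ZMod 4) + 1))
    · exact iff_of_false (G.irrefl ·) (by decide : ¬((2:ZMod 4) = (2:ZMod 4) + 1 ∨ (2:ZMod 4) = (2:ZMod 4) + 1))
    · exact iff_of_true hcd (by decide : ((3:ZMod 4) = (2:ZMod 4) + 1 ∨ (2:ZMod 4) = (3:ZMod 4) + 1))
    · exact iff_of_true hda (by decide : ((0:ZMod 4) = (3:ZMod 4) + 1 ∨ (3:ZMod 4) = (0:ZMod 4) + 1))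
    · exact iff_of_false (fun h => nbd h.symm) (by decide : ¬((1:ZMod 4) = (3:ZMod 4) + 1 ∨ (3:ZMod 4) = (1:ZMod 4) + 1))
    · exact iff_of_true hcd.symm (by decide : ((2:ZMod 4) = (3:ZMod 4) + 1 ∨ (3:ZMod 4) = (2:ZMod 4) + 1))
    · exact iff_of_false (G.irrefl ·) (by decide : ¬((3:ZMod 4) = (3:ZMod 4) + 1 ∨ (3:ZMod 4) = (3:ZMod 4) + 1))

lemma hole5 {V : Type*} (G : SimpleGraph V) {a b c d e : V}
    (hac : a ≠ c) (had : a ≠ d) (hbd : b ≠ d) (hbe : b ≠ e) (hce : c ≠ e)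
    (hab : G.Adj a b) (hbc : G.Adj b c) (hcd : G.Adj c d) (hde : G.Adj d e) (hea : G.Adj e a)
    (nac : ¬G.Adj a c) (nad : ¬G.Adj a d) (nbd : ¬G.Adj b d) (nbe : ¬G.Adj b e)
    (nce : ¬G.Adj c e) :
    IsHoleEmb G 5 ![a, b, c, d, e] := by
  have hab' := hab.ne
  have hbc' := hbc.ne
  have hcd' := hcd.ne
  have hde' := hde.ne
  have hea' := hea.ne
  refine ⟨by norm_num, ?inj, ?adj⟩
  case inj =>
    intro i j h
    fin_cases i <;> fin_cases j <;> simp_all <;> rfl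
  case adj =>
    intro i j
    fin_cases i <;> fin_cases j
    · exact iff_of_false (G.irrefl ·) (by decide : ¬((0:ZMod 5) = (0:ZMod 5) + 1 ∨ (0:ZMod 5) = (0:ZMod 5) + 1))
    · exact iff_of_true hab (by decide : ((1:ZMod 5) = (0:ZMod 5) + 1 ∨ (0:ZMod 5) = (1:ZMod 5) + 1))
    · exact iff_of_false nac (by decide : ¬((2:ZMod 5) = (0:ZMod 5) + 1 ∨ (0:ZMod 5) = (2:ZMod 5) + 1))
    · exact iff_of_false nad (by decide : ¬((3:ZMod 5) = (0:ZMod 5) + 1 ∨ (0:ZMod 5) = (3:ZMod 5) + 1))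
    · exact iff_of_true hea.symm (by decide : ((4:ZMod 5) = (0:ZMod 5) + 1 ∨ (0:ZMod 5) = (4:ZMod 5) + 1))
    · exact iff_of_true hab.symm (by decide : ((0:ZMod 5) = (1:ZMod 5) + 1 ∨ (1:ZMod 5) = (0:ZMod 5) + 1))
    · exact iff_of_false (G.irrefl ·) (by decide : ¬((1:ZMod 5) = (1:ZMod 5) + 1 ∨ (1:ZMod 5) = (1:ZMod 5) + 1))
    · exact iff_of_true hbc (by decide : ((2:ZMod 5) = (1:ZMod 5) + 1 ∨ (1:ZMod 5) = (2:ZMod 5) + 1))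
    · exact iff_of_false nbd (by decide : ¬((3:ZMod 5) = (1:ZMod 5) + 1 ∨ (1:ZMod 5) = (3:ZMod 5) + 1))
    · exact iff_of_false nbe (by decide : ¬((4:ZMod 5) = (1:ZMod 5) + 1 ∨ (1:ZMod 5) = (4:ZMod 5) + 1))
    · exact iff_of_false (fun h => nac h.symm) (by decide : ¬((0:ZMod 5) = (2:ZMod 5) + 1 ∨ (2:ZMod 5) = (0:ZMod 5) + 1))
    · exact iff_of_true hbc.symm (by decide : ((1:ZMod 5) = (2:ZMod 5) + 1 ∨ (2:ZMod 5) = (1:ZMod 5) + 1))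
    · exact iff_of_false (G.irrefl ·) (by decide : ¬((2:ZMod 5) = (2:ZMod 5) + 1 ∨ (2:ZMod 5) = (2:ZMod 5) + 1))
    · exact iff_of_true hcd (by decide : ((3:ZMod 5) = (2:ZMod 5) + 1 ∨ (2:ZMod 5) = (3:ZMod 5) + 1))
    · exact iff_of_false nce (by decide : ¬((4:ZMod 5) = (2:ZMod 5) + 1 ∨ (2:ZMod 5) = (4:ZMod 5) + 1))
    · exact iff_of_false (fun h => nad h.symm) (by decide : ¬((0:ZMod 5) = (3:ZMod 5) + 1 ∨ (3:ZMod 5) = (0:ZMod 5) + 1))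
    · exact iff_of_false (fun h => nbd h.symm) (by decide : ¬((1:ZMod 5) = (3:ZMod 5) + 1 ∨ (3:ZMod 5) = (1:ZMod 5) + 1))
    · exact iff_of_true hcd.symm (by decide : ((2:ZMod 5) = (3:ZMod 5) + 1 ∨ (3:ZMod 5) = (2:ZMod 5) + 1))
    · exact iff_of_false (G.irrefl ·) (by decide : ¬((3:ZMod 5) = (3:ZMod 5) + 1 ∨ (3:ZMod 5) = (3:ZMod 5) + 1))
    · exact iff_of_true hde (by decide : ((4:ZMod 5) = (3:ZMod 5) + 1 ∨ (3:ZMod 5) = (4:ZMod 5) + 1))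
    · exact iff_of_true hea (by decide : ((0:ZMod 5) = (4:ZMod 5) + 1 ∨ (4:ZMod 5) = (0:ZMod 5) + 1))
    · exact iff_of_false (fun h => nbe h.symm) (by decide : ¬((1:ZMod 5) = (4:ZMod 5) + 1 ∨ (4:ZMod 5) = (1:ZMod 5) + 1))
    · exact iff_of_false (fun h => nce h.symm) (by decide : ¬((2:ZMod 5) = (4:ZMod 5) + 1 ∨ (4:ZMod 5) = (2:ZMod 5) + 1))
    · exact iff_of_true hde.symm (by decide : ((3:ZMod 5) = (4:ZMod 5) + 1 ∨ (4:ZMod 5) = (3:ZMod 5) + 1))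
    · exact iff_of_false (G.irrefl ·) (by decide : ¬((4:ZMod 5) = (4:ZMod 5) + 1 ∨ (4:ZMod 5) = (4:ZMod 5) + 1))


lemma anti_nb {V : Type*} (G : SimpleGraph V) (I : Set V) (j : V) (S : Set V) (x0 : V)
    (hSeq : S = {y : V | Relation.ReflTransGen
      (fun a b : V => a ∈ G.neighborSet j ∩ I ∧ b ∈ G.neighborSet j ∩ I ∧ Gᶜ.Adj a b) x0 y})
    (p q : V) (hp : p ∈ S) (hq : q ∈ S) (hpq : p ≠ q)
    (x : V) (hx : x ∈ S) : ∃ y ∈ S, y ≠ x ∧ ¬G.Adj x y := by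
  subst hSeq
  simp only [Set.mem_setOf_eq] at hp hq hx ⊢
  rcases hx.cases_tail with h0 | ⟨c, hc, hr⟩
  · subst h0
    obtain ⟨w, hwS, hwne⟩ :
        ∃ w, Relation.ReflTransGen
          (fun a b : V => a ∈ G.neighborSet j ∩ I ∧ b ∈ G.neighborSet j ∩ I ∧ Gᶜ.Adj a b)
          x w ∧ w ≠ x := by
      by_cases hpx : p = x
      · exact ⟨q, hq, fun h => hpq (hpx.trans h.symm)⟩
      · exact ⟨p, hp, hpx⟩
    rcases hwS.cases_head with h1 | ⟨c, hrc, _⟩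
    · exact absurd h1.symm hwne
    · have hcadj := hrc.2.2
      rw [SimpleGraph.compl_adj] at hcadj
      exact ⟨c, Relation.ReflTransGen.single hrc, hcadj.1.symm, hcadj.2⟩
  · have hcadj := hr.2.2
    rw [SimpleGraph.compl_adj] at hcadj
    exact ⟨c, hc, hcadj.1, fun h => hcadj.2 h.symm⟩

lemma complete_out {V : Type*} (G : SimpleGraph V) (I : Set V) (j : V) (S : Set V) (x0 : V)
    (hSeq : S = {y : V | Relation.ReflTransGen
      (fun a b : V => a ∈ G.neighborSet j ∩ I ∧ b ∈ G.neighborSet j ∩ I ∧ Gᶜ.Adj a b) x0 y})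
    (x : V) (hadj : G.Adj j x) (hxI : x ∈ I) (hxS : x ∉ S)
    (w : V) (hw : w ∈ S) (hwN : w ∈ G.neighborSet j ∩ I) : G.Adj x w := by
  subst hSeq
  by_contra hn
  refine hxS ?_
  simp only [Set.mem_setOf_eq] at hw ⊢
  exact hw.tail ⟨hwN, ⟨hadj, hxI⟩,
    (SimpleGraph.compl_adj _ _ _).mpr ⟨fun h => hxS (h ▸ hw), fun h2 => hn h2.symm⟩⟩

/-- In an `ℓ`-monoholed crown (`ℓ ≥ 6`) with partition `I, J`, where
for each `j ∈ J`, `g j` is the vertex set of a nontrivial anticomponent of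
`N(j) ∩ I` (its set of good children), any two non-adjacent vertices `u, v ∈ J`
satisfy: `u` has no neighbor in `g v` and `v` has no neighbor in `g u`. -/
theorem stmt15 {V : Type*} [Fintype V] {ℓ : ℕ} (hℓ : 6 ≤ ℓ) (G : SimpleGraph V)
    (hmono : Monoholed G ℓ)
    (I J : Set V) (hpart : I ∪ J = Set.univ) (hdisj : Disjoint I J)
    (hI : I.Nonempty) (hJ : J.Nonempty)
    (ax1 : ¬ ∃ Z X Y : Set V, G.IsClique Z ∧ Z ∪ X ∪ Y = Set.univ ∧
      Disjoint Z X ∧ Disjoint Z Y ∧ Disjoint X Y ∧ Y.Nonempty ∧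
      (∀ x ∈ X, ∀ y ∈ Y, ¬G.Adj x y) ∧ I ⊆ X ∪ Z)
    (ax2 : ∀ (k : ℕ) (f : Fin (k+1) → V), IsInducedPathEmb G k f →
      f 0 ∈ I → f (Fin.last k) ∈ I → f 0 ≠ f (Fin.last k) →
      (∀ i : Fin (k+1), i ≠ 0 → i ≠ Fin.last k → f i ∈ J) → k = 2)
    (ax3 : ¬ ∃ a b c d : V, a ∈ I ∧ b ∈ I ∧ c ∈ I ∧ d ∈ I ∧
      a ≠ b ∧ a ≠ c ∧ a ≠ d ∧ b ≠ c ∧ b ≠ d ∧ c ≠ d ∧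
      G.Adj a b ∧ G.Adj b c ∧ G.Adj c d ∧ ¬G.Adj a c ∧ ¬G.Adj a d ∧ ¬G.Adj b d)
    (ax4 : ¬ ∃ p1 p2 p3 p4 p5 : V, p1 ∈ I ∧ p3 ∈ I ∧ p5 ∈ I ∧ p2 ∈ J ∧ p4 ∈ J ∧
      p1 ≠ p2 ∧ p1 ≠ p3 ∧ p1 ≠ p4 ∧ p1 ≠ p5 ∧ p2 ≠ p3 ∧ p2 ≠ p4 ∧ p2 ≠ p5 ∧
      p3 ≠ p4 ∧ p3 ≠ p5 ∧ p4 ≠ p5 ∧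
      G.Adj p1 p2 ∧ G.Adj p2 p3 ∧ G.Adj p3 p4 ∧ G.Adj p4 p5 ∧
      ¬G.Adj p1 p3 ∧ ¬G.Adj p1 p4 ∧ ¬G.Adj p1 p5 ∧ ¬G.Adj p2 p4 ∧ ¬G.Adj p2 p5 ∧ ¬G.Adj p3 p5)
    (ax5 : ¬ ∃ i1 i2 i3 i4 j : V, i1 ∈ I ∧ i2 ∈ I ∧ i3 ∈ I ∧ i4 ∈ I ∧ j ∈ J ∧
      i1 ≠ i2 ∧ i1 ≠ i3 ∧ i1 ≠ i4 ∧ i1 ≠ j ∧ i2 ≠ i3 ∧ i2 ≠ i4 ∧ i2 ≠ j ∧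
      i3 ≠ i4 ∧ i3 ≠ j ∧ i4 ≠ j ∧
      G.Adj j i1 ∧ G.Adj j i2 ∧ G.Adj i2 i3 ∧ G.Adj i2 i4 ∧
      ¬G.Adj j i3 ∧ ¬G.Adj j i4 ∧ ¬G.Adj i1 i2 ∧ ¬G.Adj i1 i3 ∧ ¬G.Adj i1 i4 ∧ ¬G.Adj i3 i4)
    (g : V → Set V)
    (hg : ∀ j ∈ J,
      g j ⊆ G.neighborSet j ∩ I ∧
      (∃ x ∈ g j, ∃ y ∈ g j, x ≠ y) ∧
      (∃ x0 ∈ g j, g j = {y : V | Relation.ReflTransGen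
        (fun a b : V => a ∈ G.neighborSet j ∩ I ∧ b ∈ G.neighborSet j ∩ I ∧ Gᶜ.Adj a b)
        x0 y})) :
    ∀ u ∈ J, ∀ v ∈ J, u ≠ v → ¬G.Adj u v →
      (∀ x ∈ g v, ¬G.Adj u x) ∧ (∀ x ∈ g u, ¬G.Adj v x) := by
  have hIJ : ∀ a ∈ I, ∀ b ∈ J, a ≠ b := fun a ha b hb he =>
    Set.disjoint_left.mp hdisj ha (he ▸ hb)
  have key : ∀ u ∈ J, ∀ v ∈ J, u ≠ v → ¬G.Adj u v → ∀ x ∈ g v, ¬G.Adj u x := by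
    intro u hu v hv huv hnuv x hxgv hux
    obtain ⟨hsubv, ⟨pv, hpv, qv, hqv, hpqv⟩, ⟨xv0, hxv0, hveq⟩⟩ := hg v hv
    obtain ⟨hsubu, ⟨pu, hpu, qu, hqu, hpqu⟩, ⟨xu0, hxu0, hueq⟩⟩ := hg u hu
    have hvx : G.Adj v x := (hsubv hxgv).1
    have hxI : x ∈ I := (hsubv hxgv).2
    obtain ⟨y, hygv, hyx, hnxy⟩ := anti_nb G I v (g v) xv0 hveq pv qv hpv hqv hpqv x hxgv
    have hvy : G.Adj v y := (hsubv hygv).1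
    have hyI : y ∈ I := (hsubv hygv).2
    by_cases huy : G.Adj u y
    · have h4 := hmono 4 _ (hole4 G hyx.symm huv hux.symm huy hvy.symm hvx hnxy hnuv)
      omega
    · by_cases hxgu : x ∈ g u
      · obtain ⟨z, hzgu, hzx, hnxz⟩ :=
          anti_nb G I u (g u) xu0 hueq pu qu hpu hqu hpqu x hxgu
        have huz : G.Adj u z := (hsubu hzgu).1
        have hzI : z ∈ I := (hsubu hzgu).2
        have hzy : z ≠ y := fun h => huy (h ▸ huz)
        by_cases hvz : G.Adj v z
        · have h4 := hmono 4 _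
            (hole4 G hzx huv huz.symm hux hvx.symm hvz (fun h => hnxz h.symm) hnuv)
          omega
        · by_cases hzy' : G.Adj z y
          · have h5 := hmono 5 _
              (hole5 G hzx.symm hyx.symm (hIJ y hyI u hu).symm huv (hIJ z hzI v hv)
                hux.symm huz hzy' hvy.symm hvx
                hnxz hnxy huy hnuv (fun h => hvz h.symm))
            omega
          · exact ax4 ⟨z, u, x, v, y, hzI, hxI, hyI, hu, hv,
              hIJ z hzI u hu, hzx, hIJ z hzI v hv, hzy,
              (hIJ x hxI u hu).symm, huv, (hIJ y hyI u hu).symm,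
              hIJ x hxI v hv, hyx.symm, (hIJ y hyI v hv).symm,
              huz.symm, hux, hvx.symm, hvy,
              (fun h => hnxz h.symm), (fun h => hvz h.symm), hzy', hnuv, huy, hnxy⟩
      · have hcomp : ∀ w ∈ g u, G.Adj x w := fun w hw =>
          complete_out G I u (g u) xu0 hueq x hux hxI hxgu w hw (hsubu hw)
        have main : ∀ a b : V, a ∈ g u → b ∈ g u → a ≠ b → ¬G.Adj a b →
            ¬G.Adj v a → False := by
          intro a b ha hb hab' hnab hnva
          have hua : G.Adj u a := (hsubu ha).1
          have haI : a ∈ I := (hsubu ha).2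
          have hub : G.Adj u b := (hsubu hb).1
          have hbI : b ∈ I := (hsubu hb).2
          have hxa : G.Adj x a := hcomp a ha
          have hxb : G.Adj x b := hcomp b hb
          have hax : a ≠ x := fun h => hxgu (h ▸ ha)
          have hbx : b ≠ x := fun h => hxgu (h ▸ hb)
          have hay : a ≠ y := fun h => huy (h ▸ hua)
          have hbyne : b ≠ y := fun h => huy (h ▸ hub)
          by_cases hay' : G.Adj a y
          · have h4 := hmono 4 _
              (hole4 G (hIJ a haI v hv) hyx hay' hvy.symm hvx hxa
                (fun h => hnva h.symm) (fun h => hnxy h.symm))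
            exact absurd h4 (by omega)
          · by_cases hvb : G.Adj v b
            · by_cases hby : G.Adj b y
              · exact ax3 ⟨a, x, b, y, haI, hxI, hbI, hyI,
                  hax, hab', hay, hbx.symm, hyx.symm, hbyne,
                  hxa.symm, hxb, hby, hnab, hay', hnxy⟩
              · exact ax4 ⟨a, u, b, v, y, haI, hbI, hyI, hu, hv,
                  hIJ a haI u hu, hab', hIJ a haI v hv, hay,
                  (hIJ b hbI u hu).symm, huv, (hIJ y hyI u hu).symm,
                  hIJ b hbI v hv, hbyne, (hIJ y hyI v hv).symm,
                  hua.symm, hub, hvb.symm, hvy,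
                  hnab, (fun h => hnva h.symm), hay', hnuv, huy, hby⟩
            · by_cases hby : G.Adj b y
              · have h4 := hmono 4 _
                  (hole4 G hyx.symm (hIJ b hbI v hv) hxb hby hvy.symm hvx
                    hnxy (fun h => hvb h.symm))
                exact absurd h4 (by omega)
              · exact ax5 ⟨y, x, a, b, v, hyI, hxI, haI, hbI, hv,
                  hyx, hay.symm, hbyne.symm, hIJ y hyI v hv,
                  hax.symm, hbx.symm, hIJ x hxI v hv,
                  hab', hIJ a haI v hv, hIJ b hbI v hv,
                  hvy, hvx, hxa, hxb,
                  hnva, hvb, (fun h => hnxy h.symm), (fun h => hay' h.symm),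
                  (fun h => hby h.symm), hnab⟩
        obtain ⟨p', hp'gu, hp'p, hnpp'⟩ :=
          anti_nb G I u (g u) xu0 hueq pu qu hpu hqu hpqu pu hpu
        rcases em (G.Adj v pu) with hv1 | hv1
        · rcases em (G.Adj v p') with hv2 | hv2
          · have h4 := hmono 4 _
              (hole4 G hp'p.symm huv ((hsubu hpu).1).symm (hsubu hp'gu).1
                hv2.symm hv1 hnpp' hnuv)
            exact absurd h4 (by omega)
          · exact main p' pu hp'gu hpu hp'p (fun h => hnpp' h.symm) hv2
        · exact main pu p' hpu hp'gu hp'p.symm hnpp' hv1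
  intro u hu v hv huv hnuv
  exact ⟨fun x hx hadj => key u hu v hv huv hnuv x hx hadj,
    fun x hx hadj => key v hv u hu huv.symm (fun h => hnuv h.symm) x hx hadj⟩
end
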